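/- arXiv:2110.01230 — 5 statements merged into one kernel-verified Lean document; each statement's English description precedes it below -/
import Mathlib

section
/- Let 𝒮 = (S_1, …, S_r) be an r-tuple of rank-one supports in ⟦m⟧ × ⟦n⟧ that is closable. Then every r-tuple 𝒞 = (C_1, …, C_r) of complex m×n matrices of rank at most one with supp(C_i) = S_i for all i is the P-unique exact matrix decomposition of Z := C_1 + … + C_r in Γ_𝒮: every 𝒞' ∈ Γ_𝒮 with 𝒜(𝒞') = Z equals 𝒞 up to a permutation of the r components. -/
open scoped Classical

lemma minor_eq {m n : ℕ} (M : Matrix (Fin m) (Fin n) ℂ) (h : M.rank ≤ 1)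
    (k k' : Fin m) (l l' : Fin n) : M k l * M k' l' = M k l' * M k' l := by
  set W := LinearMap.range M.mulVecLin with hWdef
  have hfin : Module.finrank ℂ W ≤ 1 := h
  have hW : Module.rank ℂ W ≤ 1 := by
    rw [← Module.finrank_eq_rank ℂ W]
    exact_mod_cast hfin
  obtain ⟨v₀, hv₀⟩ := rank_le_one_iff.1 hW
  have hcol : ∀ j : Fin n, (fun i => M i j) ∈ W := by
    intro j
    refine ⟨Pi.single j 1, ?_⟩
    ext i
    simp [Matrix.mulVecLin, Matrix.mulVec, dotProduct, Pi.single_apply]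
  obtain ⟨a, ha⟩ := hv₀ ⟨_, hcol l⟩
  obtain ⟨b, hb⟩ := hv₀ ⟨_, hcol l'⟩
  have ha' : ∀ i, a * (v₀ : Fin m → ℂ) i = M i l := fun i =>
    congrFun (congrArg Subtype.val ha) i
  have hb' : ∀ i, b * (v₀ : Fin m → ℂ) i = M i l' := fun i =>
    congrFun (congrArg Subtype.val hb) i
  calc M k l * M k' l' = (a * (v₀ : Fin m → ℂ) k) * (b * (v₀ : Fin m → ℂ) k') := by
        rw [ha', hb']
    _ = (b * (v₀ : Fin m → ℂ) k) * (a * (v₀ : Fin m → ℂ) k') := by ring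
    _ = M k l' * M k' l := by rw [ha', hb']

lemma sum_cancel_eq {r : ℕ} (i : Fin r) (f g : Fin r → ℂ)
    (hfg : ∑ j, f j = ∑ j, g j) (hoth : ∀ j, j ≠ i → f j = g j) : f i = g i := by
  have h1 : f i + ∑ j ∈ Finset.univ.erase i, f j = ∑ j, f j :=
    Finset.add_sum_erase _ f (Finset.mem_univ i)
  have h2 : g i + ∑ j ∈ Finset.univ.erase i, g j = ∑ j, g j :=
    Finset.add_sum_erase _ g (Finset.mem_univ i)
  have h3 : ∑ j ∈ Finset.univ.erase i, f j = ∑ j ∈ Finset.univ.erase i, g j :=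
    Finset.sum_congr rfl fun j hj => hoth j (Finset.mem_erase.1 hj).1
  have := h1.trans (hfg.trans h2.symm)
  rw [h3] at this
  exact add_right_cancel this

/-- Completion operation `a` *inside* each bipartite graph of a tuple: for every subgraph
of `Gᵢ` isomorphic to the complete bipartite graph `K_{2,2}` minus one edge, add the
missing edge. -/
noncomputable def aOp {α β : Type*} {r : ℕ} (E : Fin r → Finset (α × β)) :
    Fin r → Finset (α × β) := fun i =>
  E i ∪ (((E i).image Prod.fst ×ˢ (E i).image Prod.snd).filter fun p =>
    ∃ k' ∈ (E i).image Prod.fst, ∃ l' ∈ (E i).image Prod.snd,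
      k' ≠ p.1 ∧ l' ≠ p.2 ∧ (p.1, l') ∈ E i ∧ (k', l') ∈ E i ∧ (k', p.2) ∈ E i)

/-- Completion operation `b` *across* the graphs of a tuple: add to `Gᵢ` every pair
`e ∈ V₁ i × V₂ i` absent from `E i` such that `e ∈ E j` for every `j ≠ i` with
`e ∈ V₁ j × V₂ j`. -/
noncomputable def bOp {α β : Type*} {r : ℕ} (V₁ : Fin r → Finset α) (V₂ : Fin r → Finset β)
    (E : Fin r → Finset (α × β)) : Fin r → Finset (α × β) := fun i =>
  E i ∪ ((V₁ i ×ˢ V₂ i).filter fun e =>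
    e ∉ E i ∧ ∀ j, j ≠ i → e ∈ V₁ j ×ˢ V₂ j → e ∈ E j)

/-- The edge sets of the observable bipartite graphs of the tuple of rank-one supports
`Sᵢ = Rᵢ × Kᵢ`: the `i`-th observable graph has vertex parts `Rᵢ`, `Kᵢ` and edge set
`Sᵢ \ ⋃_{j ≠ i} Sⱼ`. -/
noncomputable def obsE {m n r : ℕ} (R : Fin r → Finset (Fin m)) (K : Fin r → Finset (Fin n)) :
    Fin r → Finset (Fin m × Fin n) := fun i =>
  (R i ×ˢ K i).filter fun p => ∀ j, j ≠ i → p ∉ R j ×ˢ K j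

/-- The tuple of rank-one supports `Sᵢ = Rᵢ × Kᵢ` is *closable* if the closure (the fixed
point reached by iterating `b ∘ a` starting from the observable bipartite graphs, whose
`i`-th vertex parts are `Rᵢ` and `Kᵢ`) is the tuple of complete bipartite graphs, the
`i`-th one having edge set `Rᵢ × Kᵢ`. -/
noncomputable def Closable {m n r : ℕ} (R : Fin r → Finset (Fin m))
    (K : Fin r → Finset (Fin n)) : Prop :=
  ∃ N : ℕ, (bOp R K ∘ aOp)^[N] (obsE R K) = fun i => R i ×ˢ K i

/-- The support of a matrix: the set of index pairs of its nonzero entries. -/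
def msupp {m n : ℕ} (M : Matrix (Fin m) (Fin n) ℂ) : Set (Fin m × Fin n) :=
  {p | M p.1 p.2 ≠ 0}

/-- If the tuple of rank-one supports `𝒮 = (S₁, …, S_r)`,
`Sᵢ = Rᵢ × Kᵢ ⊆ ⟦m⟧ × ⟦n⟧`, is closable, then every tuple `𝒞 = (C₁, …, C_r)` of complex
`m × n` matrices of rank at most one with `supp Cᵢ = Sᵢ` for all `i` is the P-unique
exact matrix decomposition of `Z := C₁ + ⋯ + C_r` in `Γ_𝒮`: every `𝒞' ∈ Γ_𝒮` with
`𝒜(𝒞') = Z` equals `𝒞` up to a permutation of the `r` components. -/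
theorem closable_exact_support_P_unique {m n r : ℕ}
    (R : Fin r → Finset (Fin m)) (K : Fin r → Finset (Fin n))
    (hclos : Closable R K)
    (C : Fin r → Matrix (Fin m) (Fin n) ℂ)
    (hrank : ∀ i, (C i).rank ≤ 1)
    (hsupp : ∀ i, msupp (C i) = ↑(R i ×ˢ K i))
    (C' : Fin r → Matrix (Fin m) (Fin n) ℂ)
    (hrank' : ∀ i, (C' i).rank ≤ 1)
    (hsupp' : ∀ i, msupp (C' i) ⊆ ↑(R i ×ˢ K i))
    (hsum : ∑ i, C' i = ∑ i, C i) :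
    ∃ σ : Equiv.Perm (Fin r), ∀ i, C' i = C (σ i) := by
  classical
  -- basic facts about supports
  have hC0 : ∀ i (p : Fin m × Fin n), p ∉ R i ×ˢ K i → C i p.1 p.2 = 0 := by
    intro i p hp
    by_contra h
    have hm : p ∈ msupp (C i) := h
    rw [hsupp i] at hm
    exact hp (Finset.mem_coe.1 hm)
  have hC'0 : ∀ i (p : Fin m × Fin n), p ∉ R i ×ˢ K i → C' i p.1 p.2 = 0 := by
    intro i p hp
    by_contra h
    exact hp (Finset.mem_coe.1 (hsupp' i (h : p ∈ msupp (C' i))))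
  have hCne : ∀ i (p : Fin m × Fin n), p ∈ R i ×ˢ K i → C i p.1 p.2 ≠ 0 := by
    intro i p hp
    have : p ∈ msupp (C i) := by
      rw [hsupp i]; exact Finset.mem_coe.2 hp
    exact this
  have hsumE : ∀ (k : Fin m) (l : Fin n), ∑ j, C' j k l = ∑ j, C j k l := by
    intro k l
    have := congrFun (congrFun hsum k) l
    simpa [Matrix.sum_apply] using this
  -- the invariant
  set Q : (Fin r → Finset (Fin m × Fin n)) → Prop :=
    fun E => ∀ i, E i ⊆ R i ×ˢ K i ∧ ∀ p ∈ E i, C' i p.1 p.2 = C i p.1 p.2 with hQdef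
  have hbase : Q (obsE R K) := by
    intro i
    constructor
    · intro p hp
      simp only [obsE, Finset.mem_filter] at hp
      exact hp.1
    · intro p hp
      simp only [obsE, Finset.mem_filter] at hp
      refine sum_cancel_eq i _ _ (hsumE p.1 p.2) fun j hj => ?_
      rw [hC'0 j p (hp.2 j hj), hC0 j p (hp.2 j hj)]
  have hstepA : ∀ E, Q E → Q (aOp E) := by
    intro E hE i
    obtain ⟨hEsub, hEag⟩ := hE i
    have hmem : ∀ p : Fin m × Fin n, p ∈ aOp E i →
        p ∈ E i ∨ ((∃ q ∈ E i, q.1 = p.1) ∧ (∃ q ∈ E i, q.2 = p.2) ∧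
          ∃ k' l', (p.1, l') ∈ E i ∧ (k', l') ∈ E i ∧ (k', p.2) ∈ E i) := by
      intro p hp
      simp only [aOp, Finset.mem_union, Finset.mem_filter, Finset.mem_product,
        Finset.mem_image] at hp
      rcases hp with h | ⟨⟨⟨q1, hq1, hq1'⟩, q2, hq2, hq2'⟩, k', _, l', _, _, _, he1, he2, he3⟩
      · exact Or.inl h
      · exact Or.inr ⟨⟨q1, hq1, hq1'⟩, ⟨q2, hq2, hq2'⟩, k', l', he1, he2, he3⟩
    have hfst : ∀ x, (∃ q ∈ E i, q.1 = x) → x ∈ R i := by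
      rintro x ⟨q, hq, rfl⟩
      exact (Finset.mem_product.1 (hEsub hq)).1
    have hsnd : ∀ x, (∃ q ∈ E i, q.2 = x) → x ∈ K i := by
      rintro x ⟨q, hq, rfl⟩
      exact (Finset.mem_product.1 (hEsub hq)).2
    constructor
    · intro p hp
      rcases hmem p hp with h | ⟨h1, h2, _⟩
      · exact hEsub h
      · exact Finset.mem_product.2 ⟨hfst _ h1, hsnd _ h2⟩
    · intro p hp
      rcases hmem p hp with h | ⟨h1, h2, k', l', he1, he2, he3⟩
      · exact hEag p h
      · have hkl' : (k', l') ∈ R i ×ˢ K i := hEsub he2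
        have hne : C i k' l' ≠ 0 := hCne i (k', l') hkl'
        have m1 := minor_eq (C' i) (hrank' i) p.1 k' p.2 l'
        have m2 := minor_eq (C i) (hrank i) p.1 k' p.2 l'
        have a1 : C' i p.1 l' = C i p.1 l' := hEag (p.1, l') he1
        have a2 : C' i k' l' = C i k' l' := hEag (k', l') he2
        have a3 : C' i k' p.2 = C i k' p.2 := hEag (k', p.2) he3
        apply mul_right_cancel₀ hne
        calc C' i p.1 p.2 * C i k' l' = C' i p.1 p.2 * C' i k' l' := by rw [a2]
          _ = C' i p.1 l' * C' i k' p.2 := m1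
          _ = C i p.1 l' * C i k' p.2 := by rw [a1, a3]
          _ = C i p.1 p.2 * C i k' l' := m2.symm
  have hstepB : ∀ E, Q E → Q (bOp R K E) := by
    intro E hE i
    have hmem : ∀ p : Fin m × Fin n, p ∈ bOp R K E i →
        p ∈ E i ∨ (p ∈ R i ×ˢ K i ∧ ∀ j, j ≠ i → p ∈ R j ×ˢ K j → p ∈ E j) := by
      intro p hp
      simp only [bOp, Finset.mem_union, Finset.mem_filter] at hp
      rcases hp with h | ⟨h1, _, h3⟩
      · exact Or.inl h
      · exact Or.inr ⟨h1, h3⟩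
    constructor
    · intro p hp
      rcases hmem p hp with h | ⟨h1, _⟩
      · exact (hE i).1 h
      · exact h1
    · intro p hp
      rcases hmem p hp with h | ⟨h1, hcond⟩
      · exact (hE i).2 p h
      · refine sum_cancel_eq i _ _ (hsumE p.1 p.2) fun j hj => ?_
        by_cases hpj : p ∈ R j ×ˢ K j
        · exact (hE j).2 p (hcond j hj hpj)
        · rw [hC'0 j p hpj, hC0 j p hpj]
  obtain ⟨N, hN⟩ := hclos
  have hiter : ∀ t : ℕ, Q ((bOp R K ∘ aOp)^[t] (obsE R K)) := by
    intro t
    induction t with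
    | zero => exact hbase
    | succ t ih =>
      rw [Function.iterate_succ_apply']
      exact hstepB _ (hstepA _ ih)
  have hfull : Q (fun i => R i ×ˢ K i) := hN ▸ hiter N
  have heq : ∀ i, C' i = C i := by
    intro i
    ext k l
    by_cases hkl : (k, l) ∈ R i ×ˢ K i
    · exact (hfull i).2 (k, l) hkl
    · rw [hC'0 i (k, l) hkl, hC0 i (k, l) hkl]
  exact ⟨Equiv.refl _, fun i => by rw [heq i]; rfl⟩
end

section
/- Let 𝒮 = (S_1, …, S_r) be an r-tuple of rank-one supports in ⟦m⟧ × ⟦n⟧. The following assertions are equivalent: (i) every 𝒞 ∈ Γ_𝒮 is the P-unique exact matrix decomposition of 𝒜(𝒞) in Γ_𝒮; (ii) the linear map 𝒜 : 𝒞 ↦ C_1 + … + C_r restricted to Γ_𝒮 is injective; (iii) the supports S_1, …, S_r are pairwise disjoint. -/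
lemma rank_stdBasisMatrix_le {m n : ℕ} (a : Fin m) (b : Fin n) (c : ℂ) :
    (Matrix.single a b c).rank ≤ 1 := by
  classical
  set M₁ : Matrix (Fin m) (Fin 1) ℂ := Matrix.of (fun i _ => if i = a then c else 0)
  set M₂ : Matrix (Fin 1) (Fin n) ℂ := Matrix.of (fun _ j => if j = b then 1 else 0)
  have hfac : Matrix.single a b c = M₁ * M₂ := by
    ext i j
    simp only [Matrix.mul_apply, Fin.sum_univ_one, M₁, M₂, Matrix.of_apply,
      Matrix.single, Matrix.of_apply]
    rcases eq_or_ne a i with rfl | hi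
    · rcases eq_or_ne b j with rfl | hj
      · simp
      · simp [hj, hj.symm]
    · rcases eq_or_ne b j with rfl | hj
      · simp [hi, hi.symm]
      · simp [hi, hi.symm, hj, hj.symm]
  calc (Matrix.single a b c).rank = (M₁ * M₂).rank := by rw [hfac]
    _ ≤ M₂.rank := Matrix.rank_mul_le_right M₁ M₂
    _ ≤ Fintype.card (Fin 1) := Matrix.rank_le_card_height M₂
    _ = 1 := by simp

/-- For a tuple of rank-one supports `𝒮 = (S₁, …, S_r)`,
`Sᵢ = Rᵢ × Kᵢ ⊆ ⟦m⟧ × ⟦n⟧`, the following are equivalent: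
(i) every `𝒞 ∈ Γ_𝒮` is the P-unique exact matrix decomposition of `𝒜(𝒞)` in `Γ_𝒮`;
(ii) the map `𝒜 : 𝒞 ↦ C₁ + ⋯ + C_r` restricted to `Γ_𝒮` is injective;
(iii) the supports `S₁, …, S_r` are pairwise disjoint. -/
theorem uniform_P_uniqueness_tfae {m n r : ℕ}
    (R : Fin r → Finset (Fin m)) (K : Fin r → Finset (Fin n)) :
    List.TFAE
      [∀ C C' : Fin r → Matrix (Fin m) (Fin n) ℂ,
          (∀ i, (C i).rank ≤ 1 ∧ msupp (C i) ⊆ ↑(R i ×ˢ K i)) →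
          (∀ i, (C' i).rank ≤ 1 ∧ msupp (C' i) ⊆ ↑(R i ×ˢ K i)) →
          ∑ i, C' i = ∑ i, C i → ∃ σ : Equiv.Perm (Fin r), ∀ i, C' i = C (σ i),
       ∀ C C' : Fin r → Matrix (Fin m) (Fin n) ℂ,
          (∀ i, (C i).rank ≤ 1 ∧ msupp (C i) ⊆ ↑(R i ×ˢ K i)) →
          (∀ i, (C' i).rank ≤ 1 ∧ msupp (C' i) ⊆ ↑(R i ×ˢ K i)) →
          ∑ i, C' i = ∑ i, C i → C' = C,
       ∀ i j, i ≠ j → Disjoint (R i ×ˢ K i) (R j ×ˢ K j)] := by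
  classical
  tfae_have 2 → 1 := by
    intro h C C' hC hC' hs
    exact ⟨Equiv.refl _, fun i => congrFun (h C C' hC hC' hs) i⟩
  tfae_have 1 → 3 := by
    intro h i j hij
    by_contra hnd
    rw [Finset.not_disjoint_iff] at hnd
    obtain ⟨p, hpi, hpj⟩ := hnd
    set E : Matrix (Fin m) (Fin n) ℂ := Matrix.single p.1 p.2 1 with hE
    set C : Fin r → Matrix (Fin m) (Fin n) ℂ :=
      fun k => if k = i ∨ k = j then E else 0 with hCdef
    set C' : Fin r → Matrix (Fin m) (Fin n) ℂ :=
      fun k => if k = i then (2 : ℂ) • E else 0 with hC'def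
    have hsuppE : msupp E ⊆ {p} := by
      intro q hq
      simp only [msupp, Set.mem_setOf_eq, hE, Matrix.single, Matrix.of_apply] at hq
      have : p.1 = q.1 ∧ p.2 = q.2 := by
        by_contra hc
        rw [if_neg hc] at hq
        exact hq rfl
      exact Set.mem_singleton_iff.mpr (Prod.ext this.1.symm this.2.symm)
    have hC : ∀ k, (C k).rank ≤ 1 ∧ msupp (C k) ⊆ ↑(R k ×ˢ K k) := by
      intro k
      by_cases hk : k = i ∨ k = j
      · refine ⟨by simp [hCdef, hk, hE, rank_stdBasisMatrix_le], ?_⟩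
        intro q hq
        have hq' : q ∈ msupp E := by simpa [hCdef, hk, msupp] using hq
        have : q = p := hsuppE hq'
        subst this
        rcases hk with rfl | rfl
        · simpa using hpi
        · simpa using hpj
      · constructor
        · simp [hCdef, hk]
        · intro q hq; exact absurd hq (by simp [msupp, hCdef, hk])
    have hC' : ∀ k, (C' k).rank ≤ 1 ∧ msupp (C' k) ⊆ ↑(R k ×ˢ K k) := by
      intro k
      by_cases hk : k = i
      · subst hk
        refine ⟨?_, ?_⟩
        · have h2 : ((2:ℂ) • E) = Matrix.single p.1 p.2 (2 : ℂ) := by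
            ext a b
            by_cases hab : p.1 = a ∧ p.2 = b <;>
              simp [hE, Matrix.single, hab]
          simp only [hC'def, if_pos rfl, h2]
          exact rank_stdBasisMatrix_le _ _ _
        · intro q hq
          have hq' : q ∈ msupp E := by
            simp only [msupp, Set.mem_setOf_eq, hC'def, if_pos rfl,
              Matrix.smul_apply, smul_eq_mul, ne_eq, mul_eq_zero, not_or] at hq ⊢
            exact hq.2
          have : q = p := hsuppE hq'
          subst this; simpa using hpi
      · constructor
        · simp [hC'def, hk]
        · intro q hq; exact absurd hq (by simp [msupp, hC'def, hk])
    have hsum : ∑ k, C' k = ∑ k, C k := by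
      rw [hC'def, hCdef]
      rw [Finset.sum_ite_eq' Finset.univ i (fun _ => (2:ℂ) • E)]
      simp only [Finset.mem_univ, if_true]
      have hmem : ∀ k : Fin r, (if k = i ∨ k = j then E else 0) =
          (if k ∈ ({i, j} : Finset (Fin r)) then E else 0) := by
        intro k; simp [Finset.mem_insert]
      simp_rw [hmem]
      rw [Finset.sum_ite_mem, Finset.univ_inter, Finset.sum_const,
        Finset.card_insert_of_notMem (by simp [hij]), Finset.card_singleton]
      module
    obtain ⟨σ, hσ⟩ := h C C' hC hC' hsum
    have hEne : E ≠ 0 := by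
      intro hE0
      have : E p.1 p.2 = 0 := by rw [hE0]; rfl
      simp [hE, Matrix.single] at this
    have hkey := hσ i
    simp only [hC'def, if_pos rfl, hCdef] at hkey
    by_cases hcase : σ i = i ∨ σ i = j
    · rw [if_pos hcase] at hkey
      have h1 : (1 : ℂ) • E = 0 := by
        have h2 : (2:ℂ) • E - E = 0 := by rw [hkey]; simp
        have h3 : (2:ℂ) • E - E = (1:ℂ) • E := by module
        rwa [h3] at h2
      rw [one_smul] at h1
      exact hEne h1
    · rw [if_neg hcase] at hkey
      have h1 : E = 0 := by
        have h2 : (2:ℂ)⁻¹ • ((2:ℂ) • E) = (2:ℂ)⁻¹ • (0 : Matrix (Fin m) (Fin n) ℂ) := by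
          rw [hkey]
        rwa [smul_smul, inv_mul_cancel₀ (by norm_num), one_smul, smul_zero] at h2
      exact hEne h1
  tfae_have 3 → 2 := by
    intro h C C' hC hC' hs
    funext i
    ext a b
    by_cases hp : (a, b) ∈ R i ×ˢ K i
    · have key : ∀ D : Fin r → Matrix (Fin m) (Fin n) ℂ,
          (∀ k, (D k).rank ≤ 1 ∧ msupp (D k) ⊆ ↑(R k ×ˢ K k)) →
          (∑ k, D k) a b = D i a b := by
        intro D hD
        rw [Matrix.sum_apply, Finset.sum_eq_single i]
        · intro j _ hji
          by_contra hne
          have hmem : ((a, b) : Fin m × Fin n) ∈ (↑(R j ×ˢ K j) : Set (Fin m × Fin n)) :=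
            (hD j).2 hne
          exact (Finset.disjoint_left.mp (h j i hji) (by exact_mod_cast hmem)) hp
        · simp
      have h1 := key C hC
      have h2 := key C' hC'
      rw [← h1, ← h2, hs]
    · have h1 : C i a b = 0 := by
        by_contra hne
        exact hp (by exact_mod_cast (hC i).2 hne)
      have h2 : C' i a b = 0 := by
        by_contra hne
        exact hp (by exact_mod_cast (hC' i).2 hne)
      rw [h1, h2]
  tfae_finish
end

section
/- Let L ≥ 2 and N = 2^L. Suppose (S_1, …, S_N) are rank-one supports S_i = R_i × K_i ⊆ ⟦N⟧ × ⟦N⟧ with |R_i| ≤ N/2 and |K_i| ≤ 2 for all i, forming a partition of ⟦N⟧ × ⟦N⟧, and such that for each i the submatrix (cos((π/N)(l − 1/2)(k − 1)))_{(k,l) ∈ S_i} of the DCT-II matrix has rank at most one. Then {S_1, …, S_N} = {O × {l, N+1−l} : 1 ≤ l ≤ N/2} ∪ {E × {l, N+1−l} : 1 ≤ l ≤ N/2}, where O and E denote respectively the sets of odd and even indices in ⟦N⟧. -/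
open Polynomial Finset Real Module


/-- The DCT-II matrix of size `N`: the real `N × N` matrix with entry
`cos((π/N) (l − 1/2) (k − 1))` at (1-based) row `k` and column `l`.  Here rows and
columns are 0-based (`k`, `l : Fin N` stand for the 1-based indices `k + 1`, `l + 1`). -/
noncomputable def dct (N : ℕ) : Matrix (Fin N) (Fin N) ℝ :=
  Matrix.of fun k l =>
    Real.cos (Real.pi / N * (((l : ℕ) : ℝ) + 1 / 2) * ((k : ℕ) : ℝ))



lemma cos_indep (L N : ℕ) (hN : N = 2 ^ L) (z : ℕ → ℤ)
    (h : ∑ r ∈ Finset.range N, (z r : ℝ) * Real.cos (r * Real.pi / (2 * N)) = 0) :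
    ∀ r < N, z r = 0 := by
  have hN0 : 0 < N := by rw [hN]; positivity
  have hM0 : (4 * N : ℕ) ≠ 0 := by omega
  set ζ : ℂ := Complex.exp (2 * Real.pi * Complex.I / (4 * N : ℕ)) with hζ
  have hprim : IsPrimitiveRoot ζ (4 * N) := Complex.isPrimitiveRoot_exp _ hM0
  have hNC : ((N : ℂ)) ≠ 0 := by exact_mod_cast hN0.ne'
  have hζr : ∀ r : ℕ, ζ ^ r = Complex.exp (((r : ℝ) * Real.pi / (2 * N) : ℝ) * Complex.I) := by
    intro r
    rw [hζ, ← Complex.exp_nat_mul]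
    congr 1
    push_cast
    field_simp
    ring
  have hζ2N : ζ ^ (2 * N) = -1 := by
    rw [hζr]
    rw [show (((2 * N : ℕ) : ℝ) * Real.pi / (2 * N) : ℝ) = Real.pi by
      push_cast; field_simp]
    exact Complex.exp_pi_mul_I
  have key : ∀ r : ℕ, r ≤ 2 * N →
      ζ ^ r - ζ ^ (2 * N - r) = 2 * (Real.cos ((r : ℝ) * Real.pi / (2 * N)) : ℂ) := by
    intro r hr
    have h1 : ζ ^ (2 * N - r) * ζ ^ r = -1 := by
      rw [pow_sub_mul_pow ζ hr, hζ2N]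
    have he : ζ ^ r = Complex.exp (((r : ℝ) * Real.pi / (2 * N) : ℝ) * Complex.I) := hζr r
    set θ : ℝ := ((r : ℝ) * Real.pi / (2 * N) : ℝ)
    have hne : Complex.exp ((θ:ℂ) * Complex.I) ≠ 0 := Complex.exp_ne_zero _
    have h2 : ζ ^ (2 * N - r) = -Complex.exp (-((θ:ℂ) * Complex.I)) := by
      rw [Complex.exp_neg]
      field_simp at h1 ⊢
      rw [← he]
      linear_combination h1
    rw [he, h2, Complex.ofReal_cos, Complex.cos]
    ring
  -- build the polynomial
  set p : ℚ[X] := C (2 * (z 0 : ℚ)) +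
      ∑ r ∈ Finset.Ioo 0 N, C ((z r : ℚ)) * (X ^ r - X ^ (2 * N - r)) with hp
  have haeval : (aeval ζ) p = 0 := by
    have hsplit : (Finset.range N) = insert 0 (Finset.Ioo 0 N) := by
      rw [Finset.range_eq_Ico, ← Finset.Ioo_insert_left hN0]
    have hsum : (∑ r ∈ Finset.range N, (z r : ℂ) * Real.cos ((r:ℝ) * Real.pi / (2 * N))) = 0 := by
      have := congrArg (fun x : ℝ => (x : ℂ)) h
      push_cast at this ⊢
      convert this using 2
    have : (aeval ζ) p =
        ∑ r ∈ Finset.range N, (z r : ℂ) * (ζ ^ r - ζ ^ (2 * N - r)) := by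
      rw [hp, hsplit, Finset.sum_insert (by simp)]
      simp only [map_add, map_sum, map_mul, map_sub, map_pow, aeval_C, aeval_X]
      have : ζ ^ 0 - ζ ^ (2 * N - 0) = 2 := by
        rw [key 0 (by omega)]
        norm_num
      rw [this]
      simp only [eq_ratCast, Rat.cast_mul, Rat.cast_intCast, Rat.cast_ofNat]
      push_cast
      ring
    rw [this]
    calc ∑ r ∈ Finset.range N, (z r : ℂ) * (ζ ^ r - ζ ^ (2 * N - r))
        = 2 * ∑ r ∈ Finset.range N, (z r : ℂ) * Real.cos ((r:ℝ) * Real.pi / (2 * N)) := by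
          rw [Finset.mul_sum]
          apply Finset.sum_congr rfl
          intro r hr
          rw [key r (by simp at hr; omega)]
          ring
      _ = 0 := by rw [hsum]; ring
  -- coefficients
  have hcoeff : ∀ m, m < N → p.coeff m = if m = 0 then 2 * (z 0 : ℚ) else (z m : ℚ) := by
    intro m hm
    rw [hp]
    rw [coeff_add, coeff_C, finset_sum_coeff]
    have : ∀ r ∈ Finset.Ioo 0 N,
        (C ((z r : ℚ)) * (X ^ r - X ^ (2 * N - r))).coeff m
          = if r = m then (z r : ℚ) else 0 := by
      intro r hr
      simp only [Finset.mem_Ioo] at hr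
      rw [mul_sub, coeff_sub, coeff_C_mul, coeff_C_mul, coeff_X_pow, coeff_X_pow]
      have h2 : ¬ (m = 2 * N - r) := by omega
      simp [h2, eq_comm]
    rw [Finset.sum_congr rfl this, Finset.sum_ite_eq' (Finset.Ioo 0 N) m]
    by_cases hm0 : m = 0 <;> simp [hm0, hm, Nat.pos_of_ne_zero]
  intro r0 hr0
  by_contra hz
  have hpne : p ≠ 0 := by
    intro h0
    have hcc := hcoeff r0 hr0
    rw [h0, coeff_zero] at hcc
    by_cases h00 : r0 = 0
    · rw [if_pos h00] at hcc
      apply hz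
      subst h00
      have : ((z 0 : ℚ)) = 0 := by linarith
      exact_mod_cast this
    · rw [if_neg h00] at hcc
      exact hz (by exact_mod_cast hcc.symm)
  have hdeg : p.natDegree ≤ 2 * N - 1 := by
    rw [hp]
    refine le_trans (natDegree_add_le _ _) (max_le (by rw [natDegree_C]; omega) ?_)
    refine natDegree_sum_le_of_forall_le _ _ ?_
    intro r hr
    simp only [Finset.mem_Ioo] at hr
    refine le_trans (natDegree_C_mul_le _ _) (le_trans (natDegree_sub_le _ _) ?_)
    rw [natDegree_X_pow, natDegree_X_pow]
    omega
  have hmin : 2 * N ≤ p.natDegree := by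
    have hdvd := minpoly.degree_le_of_ne_zero ℚ ζ hpne haeval
    have h1 : minpoly ℚ ζ = cyclotomic (4 * N) ℚ :=
      (cyclotomic_eq_minpoly_rat hprim (by omega)).symm
    have h2 : (minpoly ℚ ζ).natDegree = 2 * N := by
      rw [h1, natDegree_cyclotomic]
      have : 4 * N = 2 ^ (L + 2) := by rw [hN]; ring
      rw [this, Nat.totient_prime_pow Nat.prime_two (by omega)]
      rw [hN, show L + 2 - 1 = L + 1 from by omega, pow_succ]
      ring
    have := natDegree_le_natDegree hdvd
    omega
  omega



/-- `cc N e = cos (e * π / (2 N))`. -/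
noncomputable def cc (N : ℕ) (e : ℤ) : ℝ := Real.cos (e * Real.pi / (2 * N))

lemma cc_red (N : ℕ) (hN0 : 0 < N) (e : ℤ) :
    ∃ (r : ℕ) (σ ε : ℤ), r ≤ N ∧ (σ = 1 ∨ σ = -1) ∧ (ε = 1 ∨ ε = -1) ∧
      cc N e = σ * cc N r ∧ (4 * N : ℤ) ∣ e - (ε * r + (1 - σ) * N) := by
  have hNR : (0:ℝ) < (N:ℝ) := by exact_mod_cast hN0
  have h4 : (0:ℤ) < 4 * N := by positivity
  set j : ℤ := e % (4 * N) with hj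
  have hj0 : 0 ≤ j := Int.emod_nonneg e (by omega)
  have hjlt : j < 4 * N := Int.emod_lt_of_pos e h4
  have hper : cc N e = cc N j := by
    unfold cc
    obtain ⟨t, ht⟩ : (4 * (N:ℤ)) ∣ e - j := Int.dvd_self_sub_of_emod_eq rfl
    have he : e = j + 4 * N * t := by linarith
    rw [he]
    have : ((j + 4 * N * t : ℤ) : ℝ) * Real.pi / (2 * N) =
        (j : ℝ) * Real.pi / (2 * N) + (t : ℤ) * (2 * Real.pi) := by
      push_cast
      field_simp
      ring
    rw [this, Real.cos_add_int_mul_two_pi]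
  have hdvdj : (4 * N : ℤ) ∣ e - j := Int.dvd_self_sub_of_emod_eq rfl
  -- four cases
  rcases le_or_gt j N with hc1 | hc1
  · refine ⟨j.toNat, 1, 1, by omega, Or.inl rfl, Or.inl rfl, ?_, ?_⟩
    · rw [hper]; unfold cc; rw [Int.toNat_of_nonneg hj0]; ring_nf
    · simpa using (by rw [Int.toNat_of_nonneg hj0]; simpa using hdvdj :
        (4 * N : ℤ) ∣ e - ((1:ℤ) * j.toNat + (1 - 1) * N))
  rcases le_or_gt j (2 * N) with hc2 | hc2
  · refine ⟨(2 * N - j).toNat, -1, -1, by omega, Or.inr rfl, Or.inr rfl, ?_, ?_⟩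
    · rw [hper]; unfold cc
      rw [Int.toNat_of_nonneg (by omega : (0:ℤ) ≤ 2 * N - j)]
      have : ((j:ℝ)) * Real.pi / (2 * N) =
          Real.pi - ((2 * N - j : ℤ) : ℝ) * Real.pi / (2 * N) := by
        push_cast; field_simp; ring
      rw [this, Real.cos_pi_sub]; ring
    · rw [Int.toNat_of_nonneg (by omega : (0:ℤ) ≤ 2 * N - j)]
      have : e - ((-1) * (2 * N - j) + (1 - (-1)) * N) = e - j := by ring
      rw [this]; exact hdvdj
  rcases le_or_gt j (3 * N) with hc3 | hc3
  · refine ⟨(j - 2 * N).toNat, -1, 1, by omega, Or.inr rfl, Or.inl rfl, ?_, ?_⟩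
    · rw [hper]; unfold cc
      rw [Int.toNat_of_nonneg (by omega : (0:ℤ) ≤ j - 2 * N)]
      have : ((j:ℝ)) * Real.pi / (2 * N) =
          ((j - 2 * N : ℤ) : ℝ) * Real.pi / (2 * N) + Real.pi := by
        push_cast; field_simp; ring
      rw [this, Real.cos_add_pi]; ring
    · rw [Int.toNat_of_nonneg (by omega : (0:ℤ) ≤ j - 2 * N)]
      have : e - ((1:ℤ) * (j - 2 * N) + (1 - (-1)) * N) = e - j := by ring
      rw [this]; exact hdvdj
  · refine ⟨(4 * N - j).toNat, 1, -1, by omega, Or.inl rfl, Or.inr rfl, ?_, ?_⟩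
    · rw [hper]; unfold cc
      rw [Int.toNat_of_nonneg (by omega : (0:ℤ) ≤ 4 * N - j)]
      have : ((j:ℝ)) * Real.pi / (2 * N) =
          -(((4 * N - j : ℤ) : ℝ) * Real.pi / (2 * N)) + 1 * (2 * Real.pi) := by
        push_cast; field_simp; ring
      rw [this, show ((1:ℝ) * (2 * Real.pi)) = ((1:ℤ):ℝ) * (2 * Real.pi) by norm_num,
        Real.cos_add_int_mul_two_pi, Real.cos_neg]
      ring
    · rw [Int.toNat_of_nonneg (by omega : (0:ℤ) ≤ 4 * N - j)]
      have : e - ((-1) * (4 * N - j) + (1 - 1) * N) = (e - j) + (4 * N) * 1 := by ring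
      rw [this]
      exact dvd_add hdvdj ⟨1, rfl⟩

lemma cc_nat_pos (N : ℕ) (hN0 : 0 < N) (r : ℕ) (h : r < N) : 0 < cc N r := by
  have hNR : (0:ℝ) < (N:ℝ) := by exact_mod_cast hN0
  apply Real.cos_pos_of_mem_Ioo
  constructor
  · have h1 : (0:ℝ) ≤ (r:ℝ) * Real.pi / (2 * N) := by positivity
    have := Real.pi_pos
    push_cast
    nlinarith
  · have hrR : (r:ℝ) < (N:ℝ) := by exact_mod_cast h
    have := Real.pi_pos
    push_cast
    rw [div_lt_iff₀ (by positivity)]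
    nlinarith

lemma cc_N_zero (N : ℕ) (hN0 : 0 < N) : cc N N = 0 := by
  unfold cc
  have hNR : ((N:ℝ)) ≠ 0 := by positivity
  rw [show ((N:ℤ):ℝ) * Real.pi / (2 * N) = Real.pi / 2 by push_cast; field_simp]
  exact Real.cos_pi_div_two

lemma cc_nat_nonneg (N : ℕ) (hN0 : 0 < N) (r : ℕ) (h : r ≤ N) : 0 ≤ cc N r := by
  rcases lt_or_eq_of_le h with h | h
  · exact (cc_nat_pos N hN0 r h).le
  · rw [h, cc_N_zero N hN0]

lemma cc_nat_inj (N : ℕ) (hN0 : 0 < N) (r s : ℕ) (hr : r ≤ N) (hs : s ≤ N)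
    (h : cc N r = cc N s) : r = s := by
  have hNR : (0:ℝ) < (N:ℝ) := by exact_mod_cast hN0
  have hpi := Real.pi_pos
  have hmem : ∀ t : ℕ, t ≤ N → ((t:ℤ):ℝ) * Real.pi / (2 * N) ∈ Set.Icc 0 Real.pi := by
    intro t ht
    constructor
    · positivity
    · have htR : (t:ℝ) ≤ (N:ℝ) := by exact_mod_cast ht
      push_cast
      rw [div_le_iff₀ (by positivity)]
      nlinarith
  have hang := Real.injOn_cos (hmem r hr) (hmem s hs) h
  have hfac : (Real.pi / (2 * (N:ℝ))) ≠ 0 := by positivity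
  have h2 : (r:ℝ) * (Real.pi / (2 * (N:ℝ))) = (s:ℝ) * (Real.pi / (2 * (N:ℝ))) := by
    push_cast at hang
    rw [mul_div_assoc, mul_div_assoc] at hang
    exact hang
  have : (r:ℝ) = (s:ℝ) := mul_right_cancel₀ hfac h2
  exact_mod_cast this

lemma keyPair (L N : ℕ) (hN : N = 2 ^ L) (e1 e2 e3 e4 : ℤ)
    (h : cc N e1 + cc N e2 = cc N e3 + cc N e4) :
    (cc N e1 = cc N e3 ∧ cc N e2 = cc N e4) ∨
    (cc N e1 = cc N e4 ∧ cc N e2 = cc N e3) ∨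
    (cc N e1 = -cc N e2 ∧ cc N e3 = -cc N e4) := by
  have hN0 : 0 < N := by rw [hN]; positivity
  by_cases h13 : cc N e1 = cc N e3
  · exact Or.inl ⟨h13, by linarith⟩
  by_cases h14 : cc N e1 = cc N e4
  · exact Or.inr (Or.inl ⟨h14, by linarith⟩)
  refine Or.inr (Or.inr ?_)
  suffices hs : cc N e1 = -cc N e2 by exact ⟨hs, by linarith⟩
  obtain ⟨r1, σ1, ε1, hr1, hσ1, hε1, hc1, -⟩ := cc_red N hN0 e1
  obtain ⟨r2, σ2, ε2, hr2, hσ2, hε2, hc2, -⟩ := cc_red N hN0 e2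
  obtain ⟨r3, σ3, ε3, hr3, hσ3, hε3, hc3, -⟩ := cc_red N hN0 e3
  obtain ⟨r4, σ4, ε4, hr4, hσ4, hε4, hc4, -⟩ := cc_red N hN0 e4
  set z : ℕ → ℤ := fun ρ =>
    (if r1 = ρ then σ1 else 0) + (if r2 = ρ then σ2 else 0)
      - (if r3 = ρ then σ3 else 0) - (if r4 = ρ then σ4 else 0) with hzdef
  have hone : ∀ (ρ : ℕ) (σ : ℤ), ρ ≤ N →
      ∑ x ∈ Finset.range (N + 1), (if ρ = x then (σ:ℝ) else 0) * cc N x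
        = σ * cc N ρ := by
    intro ρ σ hρ
    simp only [ite_mul, zero_mul]
    rw [Finset.sum_ite_eq]
    simp [Finset.mem_range, Nat.lt_succ_iff, hρ]
  have hsum0 : ∑ ρ ∈ Finset.range (N + 1), (z ρ : ℝ) * cc N ρ = 0 := by
    have expand : ∀ ρ ∈ Finset.range (N+1), (z ρ : ℝ) * cc N ρ =
        (if r1 = ρ then (σ1:ℝ) else 0) * cc N ρ + (if r2 = ρ then (σ2:ℝ) else 0) * cc N ρ
        - (if r3 = ρ then (σ3:ℝ) else 0) * cc N ρ - (if r4 = ρ then (σ4:ℝ) else 0) * cc N ρ := by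
      intro ρ _
      rw [hzdef]
      push_cast
      ring
    rw [Finset.sum_congr rfl expand]
    rw [Finset.sum_sub_distrib, Finset.sum_sub_distrib, Finset.sum_add_distrib,
      hone r1 σ1 hr1, hone r2 σ2 hr2, hone r3 σ3 hr3, hone r4 σ4 hr4]
    rw [← hc1, ← hc2, ← hc3, ← hc4]
    linarith
  have hz : ∀ ρ < N, z ρ = 0 := by
    apply cos_indep L N hN
    have hstep := Finset.sum_range_succ (fun ρ => (z ρ : ℝ) * cc N ρ) N
    have hccast : ∀ ρ : ℕ, cc N ρ = Real.cos (ρ * Real.pi / (2 * N)) := by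
      intro ρ; unfold cc; norm_num
    have : ∑ ρ ∈ Finset.range N, (z ρ : ℝ) * cc N ρ = 0 := by
      rw [hsum0] at hstep
      rw [cc_N_zero N hN0] at hstep
      linarith [hstep]
    rw [← this]
    exact Finset.sum_congr rfl (fun ρ _ => by rw [hccast])
  rcases lt_or_eq_of_le hr1 with hr1N | hr1N
  · -- r1 < N
    have hvpos : 0 < cc N r1 := cc_nat_pos N hN0 r1 hr1N
    have k3 : r3 = r1 → σ3 = -σ1 := by
      intro he
      rcases hσ1 with h1 | h1 <;> rcases hσ3 with h3 | h3 <;> subst h1 <;> subst h3 <;>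
        first
        | rfl
        | (exfalso; apply h13; rw [hc1, hc3, he])
    have k4 : r4 = r1 → σ4 = -σ1 := by
      intro he
      rcases hσ1 with h1 | h1 <;> rcases hσ4 with h4 | h4 <;> subst h1 <;> subst h4 <;>
        first
        | rfl
        | (exfalso; apply h14; rw [hc1, hc4, he])
    have h0 := hz r1 hr1N
    rw [hzdef] at h0
    simp only at h0
    have k2 : r2 = r1 ∧ σ2 = -σ1 := by
      by_cases h2 : r2 = r1 <;> by_cases h3 : r3 = r1 <;> by_cases h4 : r4 = r1 <;>
        simp only [h2, h3, h4, if_pos, if_neg, not_false_iff] at h0 <;>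
        [skip; skip; skip; skip; skip; skip; skip; skip] <;>
        first
          | (refine ⟨by assumption, ?_⟩
             rcases hσ1 with h1 | h1 <;> rcases hσ2 with hh2 | hh2 <;>
               rcases hσ3 with hh3 | hh3 <;> rcases hσ4 with hh4 | hh4 <;>
               simp [h1, hh2, hh3, hh4] at h0 ⊢ <;> omega)
          | (exfalso
             rcases hσ1 with h1 | h1 <;> rcases hσ2 with hh2 | hh2 <;>
               rcases hσ3 with hh3 | hh3 <;> rcases hσ4 with hh4 | hh4 <;>
               simp [h1, hh2, hh3, hh4] at h0 <;> omega)
    obtain ⟨hre, hσe⟩ := k2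
    rw [hc1, hc2, hre, hσe]
    push_cast
    ring
  · -- r1 = N
    have hc10 : cc N e1 = 0 := by
      rw [hc1, hr1N, cc_N_zero N hN0]; ring
    have h3N : r3 < N := by
      rcases lt_or_eq_of_le hr3 with h' | h'
      · exact h'
      · exfalso; apply h13; rw [hc10, hc3, h', cc_N_zero N hN0]; ring
    have h4N : r4 < N := by
      rcases lt_or_eq_of_le hr4 with h' | h'
      · exact h'
      · exfalso; apply h14; rw [hc10, hc4, h', cc_N_zero N hN0]; ring
    have h0 := hz r3 h3N
    rw [hzdef] at h0
    simp only at h0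
    have h1ne : ¬ (r1 = r3) := by omega
    by_cases h2 : r2 = r3 <;> by_cases h4 : r4 = r3 <;>
      simp only [h1ne, h2, h4, if_pos, if_neg, not_false_iff] at h0
    · exfalso
      rcases hσ2 with hh2 | hh2 <;> rcases hσ3 with hh3 | hh3 <;>
        rcases hσ4 with hh4 | hh4 <;> omega
    · have hσ23 : σ2 = σ3 := by
        rcases hσ2 with hh2 | hh2 <;> rcases hσ3 with hh3 | hh3 <;> omega
      exfalso
      apply h14
      have hc23 : cc N e2 = cc N e3 := by rw [hc2, hc3, h2, hσ23]
      linarith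
    · have hσ43 : σ4 = -σ3 := by
        rcases hσ3 with hh3 | hh3 <;> rcases hσ4 with hh4 | hh4 <;> omega
      have hc34 : cc N e3 = -cc N e4 := by
        rw [hc3, hc4, h4, hσ43]; push_cast; ring
      linarith
    · exfalso
      rcases hσ3 with hh3 | hh3 <;> omega

lemma cc_mul (N : ℕ) (hN0 : 0 < N) (x y : ℤ) :
    cc N (x - y) + cc N (x + y) = 2 * (cc N x * cc N y) := by
  unfold cc
  have hNR : ((N:ℝ)) ≠ 0 := by positivity
  have h1 : ((x - y : ℤ) : ℝ) * Real.pi / (2 * N) =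
      (x:ℝ) * Real.pi / (2 * N) - (y:ℝ) * Real.pi / (2 * N) := by push_cast; ring
  have h2 : ((x + y : ℤ) : ℝ) * Real.pi / (2 * N) =
      (x:ℝ) * Real.pi / (2 * N) + (y:ℝ) * Real.pi / (2 * N) := by push_cast; ring
  rw [h1, h2, Real.cos_sub, Real.cos_add]
  ring

lemma cc_eq_cong (N : ℕ) (hN0 : 0 < N) (e f : ℤ) (h : cc N e = cc N f) :
    (4 * N : ℤ) ∣ e - f ∨ (4 * N : ℤ) ∣ e + f := by
  unfold cc at h
  rw [Real.cos_eq_cos_iff] at h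
  obtain ⟨t, ht | ht⟩ := h
  · left
    have hπ : Real.pi ≠ 0 := Real.pi_ne_zero
    have hNR : ((N:ℝ)) ≠ 0 := by positivity
    have : (f:ℝ) = 4 * N * t + e := by
      field_simp at ht
      apply mul_right_cancel₀ hπ
      rw [ht]; ring
    have hint : (f:ℤ) = 4 * N * t + e := by exact_mod_cast this
    exact ⟨-t, by rw [hint]; ring⟩
  · right
    have hπ : Real.pi ≠ 0 := Real.pi_ne_zero
    have hNR : ((N:ℝ)) ≠ 0 := by positivity
    have : (f:ℝ) = 4 * N * t - e := by
      field_simp at ht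
      apply mul_right_cancel₀ hπ
      rw [ht]; ring
    have hint : (f:ℤ) = 4 * N * t - e := by exact_mod_cast this
    exact ⟨t, by rw [hint]; ring⟩

lemma cc_add_two_n (N : ℕ) (hN0 : 0 < N) (f : ℤ) : cc N (f + 2 * N) = -cc N f := by
  unfold cc
  have hNR : ((N:ℝ)) ≠ 0 := by positivity
  rw [show ((f + 2 * N : ℤ) : ℝ) * Real.pi / (2 * N) =
      (f:ℝ) * Real.pi / (2 * N) + Real.pi by push_cast; field_simp]
  exact Real.cos_add_pi _

lemma cc_neg_cong (N : ℕ) (hN0 : 0 < N) (e f : ℤ) (h : cc N e = -cc N f) :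
    (4 * N : ℤ) ∣ e - f - 2 * N ∨ (4 * N : ℤ) ∣ e + f - 2 * N := by
  have h2 : cc N e = cc N (f + 2 * N) := by rw [cc_add_two_n N hN0 f, h]
  rcases cc_eq_cong N hN0 e (f + 2 * N) h2 with h3 | h3
  · left; convert h3 using 1; ring
  · right
    obtain ⟨t, ht⟩ := h3
    exact ⟨t - 1, by linear_combination ht⟩

/-- The three cases from a vanishing 2×2 minor of the DCT. -/
lemma detCases (L N : ℕ) (hN : N = 2 ^ L) (a b k k' : ℤ)
    (hdet : cc N (a * k) * cc N (b * k') = cc N (a * k') * cc N (b * k)) :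
    (((4 * N : ℤ) ∣ (a + b) * (k - k') ∨ (4 * N : ℤ) ∣ (a - b) * (k + k')) ∧
     ((4 * N : ℤ) ∣ (a - b) * (k - k') ∨ (4 * N : ℤ) ∣ (a + b) * (k + k'))) ∨
    (((4 * N : ℤ) ∣ a * (k - k') - b * (k + k') ∨ (4 * N : ℤ) ∣ a * (k + k') + b * (k - k')) ∧
     ((4 * N : ℤ) ∣ a * (k - k') + b * (k + k') ∨ (4 * N : ℤ) ∣ a * (k + k') - b * (k - k'))) ∨
    (((2 * N : ℤ) ∣ b * k' + N ∨ (2 * N : ℤ) ∣ a * k + N) ∧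
     ((2 * N : ℤ) ∣ b * k + N ∨ (2 * N : ℤ) ∣ a * k' + N)) := by
  have hN0 : 0 < N := by rw [hN]; positivity
  have hkey := keyPair L N hN (a * k - b * k') (a * k + b * k') (a * k' - b * k) (a * k' + b * k)
    (by rw [cc_mul N hN0 (a*k) (b*k'), cc_mul N hN0 (a*k') (b*k), hdet])
  have conv : ∀ x y : ℤ, ((4 * N : ℤ) ∣ 2 * x + 2 * N) ↔ ((2 * N : ℤ) ∣ x + N) := by
    intro x y
    constructor
    · rintro ⟨t, ht⟩
      refine ⟨t, ?_⟩
      have h' : 2 * (x + (N:ℤ)) = 2 * (2 * N * t) := by linear_combination ht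
      exact mul_left_cancel₀ two_ne_zero h'
    · rintro ⟨t, ht⟩; exact ⟨t, by linear_combination (2:ℤ) * ht⟩
  rcases hkey with ⟨h1, h2⟩ | ⟨h1, h2⟩ | ⟨h1, h2⟩
  · left
    constructor
    · rcases cc_eq_cong N hN0 _ _ h1 with h | h
      · left; convert h using 1; ring
      · right; convert h using 1; ring
    · rcases cc_eq_cong N hN0 _ _ h2 with h | h
      · left; convert h using 1; ring
      · right; convert h using 1; ring
  · right; left
    constructor
    · rcases cc_eq_cong N hN0 _ _ h1 with h | h
      · left; convert h using 1; ring
      · right; convert h using 1; ring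
    · rcases cc_eq_cong N hN0 _ _ h2 with h | h
      · left; convert h using 1; ring
      · right; convert h using 1; ring
  · right; right
    constructor
    · rcases cc_neg_cong N hN0 _ _ h1 with h | h
      · left
        rw [← conv _ 0]
        obtain ⟨t, ht⟩ := h
        exact ⟨-t, by linear_combination (-1:ℤ) * ht⟩
      · right
        rw [← conv _ 0]
        obtain ⟨t, ht⟩ := h
        exact ⟨t + 1, by linear_combination ht⟩
    · rcases cc_neg_cong N hN0 _ _ h2 with h | h
      · left
        rw [← conv _ 0]
        obtain ⟨t, ht⟩ := h
        exact ⟨-t, by linear_combination (-1:ℤ) * ht⟩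
      · right
        rw [← conv _ 0]
        obtain ⟨t, ht⟩ := h
        exact ⟨t + 1, by linear_combination ht⟩


def Cond (n a b k k' : ℤ) : Prop :=
  (((4*n) ∣ (a+b)*(k-k') ∨ (4*n) ∣ (a-b)*(k+k')) ∧
   ((4*n) ∣ (a-b)*(k-k') ∨ (4*n) ∣ (a+b)*(k+k'))) ∨
  (((4*n) ∣ a*(k-k') - b*(k+k') ∨ (4*n) ∣ a*(k+k') + b*(k-k')) ∧
   ((4*n) ∣ a*(k-k') + b*(k+k') ∨ (4*n) ∣ a*(k+k') - b*(k-k'))) ∨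
  (((2*n) ∣ b*k' + n ∨ (2*n) ∣ a*k + n) ∧
   ((2*n) ∣ b*k + n ∨ (2*n) ∣ a*k' + n))

lemma two_pow_dvd_of_odd {t : ℕ} {m x : ℤ} (hm : m % 2 = 1) (h : (2^t:ℤ) ∣ m * x) :
    (2^t:ℤ) ∣ x := by
  have hp : Prime (2:ℤ) := Int.prime_two
  have hcop : IsCoprime (2:ℤ) m := hp.coprime_iff_not_dvd.mpr (by omega)
  exact (hcop.pow_left).dvd_of_dvd_mul_left h

lemma dvd_size_contra {c y : ℤ} (h : c ∣ y) (h0 : y ≠ 0) (hlt : |y| < c) : False := by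
  have h1 : c ∣ |y| := (dvd_abs c y).mpr h
  have h2 : 0 < |y| := abs_pos.mpr h0
  have := Int.le_of_dvd h2 h1
  omega

lemma eq_of_dvd_between {c x : ℤ} (hc : 0 < c) (h : c ∣ x) (h1 : 0 < x) (h2 : x < 2*c) :
    x = c := by
  obtain ⟨t, rfl⟩ := h
  have ht1 : 1 ≤ t := by nlinarith
  have ht2 : t < 2 := by nlinarith
  have : t = 1 := by omega
  simp [this]

lemma half_dvd {n x : ℤ} (h : (2 * n) ∣ 2 * x) : n ∣ x := by
  rcases h with ⟨t, ht⟩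
  exact ⟨t, mul_left_cancel₀ two_ne_zero (by linarith)⟩

lemma quarter_dvd {n x : ℤ} (h : (4 * n) ∣ 4 * x) : n ∣ x := by
  rcases h with ⟨t, ht⟩
  exact ⟨t, mul_left_cancel₀ (by norm_num : (4:ℤ) ≠ 0) (by linarith)⟩

lemma dvd_small_zero {n x : ℤ} (h : n ∣ x) (h0 : 0 ≤ x) (h1 : x < n) : x = 0 := by
  rcases eq_or_ne x 0 with h' | h'
  · exact h'
  · exact absurd (Int.le_of_dvd (by omega) h) (by omega)

lemma noD3 {L : ℕ} {m x : ℤ} (hm : m % 2 = 1) (hx0 : 0 ≤ x) (hxn : x < 2^L)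
    (h : (2*2^L : ℤ) ∣ m * x + 2^L) : False := by
  have hn0 : (0:ℤ) < 2^L := by positivity
  obtain ⟨t, ht⟩ := h
  have h1 : (2^L:ℤ) ∣ m * x := ⟨2*t - 1, by linear_combination ht⟩
  have h2 : (2^L:ℤ) ∣ x := two_pow_dvd_of_odd hm h1
  have hx : x = 0 := dvd_small_zero h2 hx0 hxn
  rw [hx, mul_zero, zero_add] at ht
  exact dvd_size_contra (⟨t, ht⟩ : (2*2^L:ℤ) ∣ 2^L) (by omega)
    (by rw [abs_of_pos hn0]; omega)

lemma no_mixed (L : ℕ) (hL : 1 ≤ L) (a b k k' : ℤ)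
    (ha : a % 2 = 1) (hb : b % 2 = 1) (ha0 : 0 < a) (ha2 : a < 2*2^L)
    (hb0 : 0 < b) (hb2 : b < 2*2^L) (hab : a ≠ b)
    (hk : 0 ≤ k) (hk' : 0 ≤ k') (hkN : k < 2^L) (hk'N : k' < 2^L)
    (hmix : (k + k') % 2 = 1) (hc : Cond (2^L) a b k k') : False := by
  have hn0 : (0:ℤ) < 2^L := by positivity
  have h4n : (4*2^L : ℤ) = 2^(L+2) := by ring
  have h2n : (2*2^L : ℤ) = 2^(L+1) := by ring
  have hds : (k - k') % 2 = 1 := by omega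
  have hss : 0 < k + k' := by omega
  have hd0 : k - k' ≠ 0 := by omega
  have hodd4 : ∀ x t : ℤ, t % 2 = 1 → (4*2^L:ℤ) ∣ x * t → (4*2^L:ℤ) ∣ x := by
    intro x t hodd hdvd
    rw [h4n] at hdvd ⊢
    exact two_pow_dvd_of_odd hodd (by rwa [mul_comm x t] at hdvd)
  have hodd2 : ∀ x t : ℤ, t % 2 = 1 → (2*2^L:ℤ) ∣ x * t → (2*2^L:ℤ) ∣ x := by
    intro x t hodd hdvd
    rw [h2n] at hdvd ⊢
    exact two_pow_dvd_of_odd hodd (by rwa [mul_comm x t] at hdvd)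
  have hoddn : ∀ x t : ℤ, t % 2 = 1 → (2^L:ℤ) ∣ x * t → (2^L:ℤ) ∣ x := by
    intro x t hodd hdvd
    exact two_pow_dvd_of_odd hodd (by rwa [mul_comm x t] at hdvd)
  obtain ⟨v, hv⟩ : (2:ℤ) ∣ a + b := by omega
  obtain ⟨u, hu⟩ : (2:ℤ) ∣ a - b := by omega
  have huv : (u % 2 = 1 ∧ v % 2 = 0) ∨ (u % 2 = 0 ∧ v % 2 = 1) := by omega
  have hv0 : 0 < v := by omega
  have hv2 : v < 2*2^L := by omega
  have hu0 : u ≠ 0 := by omega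
  have hu2 : |u| < 2^L := by rw [abs_lt]; omega
  rcases hc with ⟨h1, -⟩ | ⟨h1, h2⟩ | ⟨h1, h2⟩
  · rcases h1 with h | h
    · have := hodd4 _ _ hds h
      exact dvd_size_contra this (by omega) (by rw [abs_of_pos (by omega)]; omega)
    · have := hodd4 _ _ hmix h
      exact dvd_size_contra this (by omega) (by rw [abs_lt]; omega)
  · rcases h1 with hA | hA' <;> rcases h2 with hB | hB'
    · -- (ad - bs) and (ad + bs)
      have h3 : (4*2^L:ℤ) ∣ 2*(b*(k+k')) := by
        have h' := dvd_sub hB hA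
        rwa [show a*(k-k') + b*(k+k') - (a*(k-k') - b*(k+k')) = 2*(b*(k+k')) from by ring]
          at h'
      have h4 : (2*2^L:ℤ) ∣ b*(k+k') :=
        half_dvd (by rwa [show (4*2^L:ℤ) = 2*(2*2^L) from by ring] at h3)
      have h5 := hodd2 _ _ hb (by rwa [mul_comm b (k+k')] at h4)
      exact dvd_size_contra h5 (by omega) (by rw [abs_of_pos hss]; omega)
    · -- (ad - bs) and (as - bd)
      have hsum : (2^L:ℤ) ∣ u*k := by
        apply quarter_dvd (n := (2^L:ℤ))
        have h' := dvd_add hA hB'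
        rwa [show a*(k-k') - b*(k+k') + (a*(k+k') - b*(k-k')) = 4*(u*k) from by
          linear_combination (2*k) * hu] at h'
      have hdiff : (2^L:ℤ) ∣ v*k' := by
        apply quarter_dvd (n := (2^L:ℤ))
        have h' := dvd_sub hA hB'
        rw [show a*(k-k') - b*(k+k') - (a*(k+k') - b*(k-k')) = -(4*(v*k')) from by
          linear_combination (-2*k') * hv, dvd_neg] at h'
        exact h'
      rcases huv with ⟨hu1, -⟩ | ⟨-, hv1⟩
      · have hk0 : k = 0 := dvd_small_zero (hoddn _ _ hu1 (by rwa [mul_comm] at hsum)) hk hkN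
        subst hk0
        have hk'odd : k' % 2 = 1 := by omega
        have hAA : (2*2^L:ℤ) ∣ v * k' := by
          apply half_dvd
          rw [show (2:ℤ)*(2*2^L) = 4*2^L from by ring]
          rw [show (2:ℤ)*(v*k') = -(a*(0-k') - b*(0+k')) from by linear_combination (-k') * hv,
            dvd_neg]
          exact hA
        have := hodd2 _ _ hk'odd hAA
        exact dvd_size_contra this (by omega) (by rw [abs_of_pos hv0]; omega)
      · have hk'0 : k' = 0 := dvd_small_zero (hoddn _ _ hv1 (by rwa [mul_comm] at hdiff)) hk' hk'N
        subst hk'0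
        have hkodd : k % 2 = 1 := by omega
        have hBB : (2*2^L:ℤ) ∣ u * k := by
          apply half_dvd
          rw [show (2:ℤ)*(2*2^L) = 4*2^L from by ring]
          rw [show (2:ℤ)*(u*k) = a*(k+0) - b*(k-0) from by linear_combination (-k) * hu]
          exact hB'
        have := hodd2 _ _ hkodd hBB
        exact dvd_size_contra this (by omega) (by omega)
    · -- (as + bd) and (ad + bs)
      have hsum : (2^L:ℤ) ∣ v*k := by
        apply quarter_dvd (n := (2^L:ℤ))
        have h' := dvd_add hA' hB
        rwa [show a*(k+k') + b*(k-k') + (a*(k-k') + b*(k+k')) = 4*(v*k) from by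
          linear_combination (2*k) * hv] at h'
      have hdiff : (2^L:ℤ) ∣ u*k' := by
        apply quarter_dvd (n := (2^L:ℤ))
        have h' := dvd_sub hA' hB
        rwa [show a*(k+k') + b*(k-k') - (a*(k-k') + b*(k+k')) = 4*(u*k') from by
          linear_combination (2*k') * hu] at h'
      rcases huv with ⟨hu1, -⟩ | ⟨-, hv1⟩
      · have hk'0 : k' = 0 := dvd_small_zero (hoddn _ _ hu1 (by rwa [mul_comm] at hdiff)) hk' hk'N
        subst hk'0
        have hkodd : k % 2 = 1 := by omega
        have hBB : (2*2^L:ℤ) ∣ v * k := by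
          apply half_dvd
          rw [show (2:ℤ)*(2*2^L) = 4*2^L from by ring]
          rw [show (2:ℤ)*(v*k) = a*(k-0) + b*(k+0) from by linear_combination (-k) * hv]
          exact hB
        have := hodd2 _ _ hkodd hBB
        exact dvd_size_contra this (by omega) (by rw [abs_of_pos hv0]; omega)
      · have hk0 : k = 0 := dvd_small_zero (hoddn _ _ hv1 (by rwa [mul_comm] at hsum)) hk hkN
        subst hk0
        have hk'odd : k' % 2 = 1 := by omega
        have hAA : (2*2^L:ℤ) ∣ u * k' := by
          apply half_dvd
          rw [show (2:ℤ)*(2*2^L) = 4*2^L from by ring]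
          rw [show (2:ℤ)*(u*k') = a*(0+k') + b*(0-k') from by linear_combination (-k') * hu]
          exact hA'
        have := hodd2 _ _ hk'odd hAA
        exact dvd_size_contra this (by omega) (by omega)
    · -- (as + bd) and (as - bd)
      have h3 : (4*2^L:ℤ) ∣ 2*(b*(k-k')) := by
        have h' := dvd_sub hA' hB'
        rwa [show a*(k+k') + b*(k-k') - (a*(k+k') - b*(k-k')) = 2*(b*(k-k')) from by ring]
          at h'
      have h4 : (2*2^L:ℤ) ∣ b*(k-k') :=
        half_dvd (by rwa [show (4*2^L:ℤ) = 2*(2*2^L) from by ring] at h3)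
      have h5 := hodd2 _ _ hb (by rwa [mul_comm b (k-k')] at h4)
      exact dvd_size_contra h5 (by omega) (by rw [abs_lt]; omega)
  · rcases h1 with h | h
    · exact noD3 hb hk' hk'N h
    · exact noD3 ha hk hkN h

lemma dvd_two_a_contra (L : ℕ) (hL : 2 ≤ L) (a : ℤ) (ha : a % 2 = 1)
    (h : (2^L:ℤ) ∣ 2*a) : False := by
  have hpow : (2:ℤ)^L = 2^2 * 2^(L-2) := by
    rw [← pow_add]
    congr 1
    omega
  have hn4 : (4:ℤ) ∣ 2^L := ⟨2^(L-2), by rw [hpow]; norm_num⟩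
  have := dvd_trans hn4 h
  omega

lemma colsum (L : ℕ) (hL : 2 ≤ L) (a b : ℤ)
    (ha : a % 2 = 1) (hb : b % 2 = 1) (ha0 : 0 < a) (ha2 : a < 2*2^L)
    (hb0 : 0 < b) (hb2 : b < 2*2^L) (hab : a ≠ b)
    (k k' : ℤ) (hkk : (k = 0 ∧ k' = 2) ∨ (k = 1 ∧ k' = 3))
    (hc : Cond (2^L) a b k k') : a + b = 2*2^L := by
  have hn0 : (0:ℤ) < 2^L := by positivity
  have hn4 : (4:ℤ) ≤ 2^L := by
    calc (4:ℤ) = 2^2 := by norm_num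
    _ ≤ 2^L := pow_le_pow_right₀ (by norm_num) hL
  have habne : a + b ≠ 0 := by omega
  have hab0 : a - b ≠ 0 := by omega
  have habs : |a - b| < 2*2^L := by rw [abs_lt]; omega
  have htwo : ∀ x : ℤ, (4*2^L:ℤ) ∣ x*(-2) → (2*2^L:ℤ) ∣ x := by
    intro x hx
    rw [show x*(-2) = -(2*x) from by ring, dvd_neg] at hx
    exact half_dvd (by rwa [show (4*2^L:ℤ) = 2*(2*2^L) from by ring] at hx)
  have htwo' : ∀ x : ℤ, (4*2^L:ℤ) ∣ x*2 → (2*2^L:ℤ) ∣ x := by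
    intro x hx
    rw [show x*2 = 2*x from by ring] at hx
    exact half_dvd (by rwa [show (4*2^L:ℤ) = 2*(2*2^L) from by ring] at hx)
  have hsumdone : (2*2^L:ℤ) ∣ a + b → a + b = 2*2^L := by
    intro hx
    exact eq_of_dvd_between (by positivity) hx (by omega) (by omega)
  have hdiffcontra : (2*2^L:ℤ) ∣ a - b → False := by
    intro hx
    exact dvd_size_contra hx hab0 habs
  rcases hkk with ⟨hk, hk'⟩ | ⟨hk, hk'⟩ <;> subst hk <;> subst hk' <;>
    rcases hc with ⟨h1, h2⟩ | ⟨h1, h2⟩ | ⟨h1, h2⟩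
  · -- even pair, D1
    rcases h1 with h | h
    · exact hsumdone (htwo _ (by rwa [show ((0:ℤ)-2) = -2 from by norm_num] at h))
    · exact absurd (htwo' _ (by rwa [show ((0:ℤ)+2) = 2 from by norm_num] at h))
        hdiffcontra
  · -- even pair, D2
    rcases h1 with h | h
    · refine hsumdone (htwo _ ?_)
      rwa [show a*((0:ℤ)-2) - b*((0:ℤ)+2) = (a+b)*(-2) from by ring] at h
    · exact absurd (htwo' _ (by
        rwa [show a*((0:ℤ)+2) + b*((0:ℤ)-2) = (a-b)*2 from by ring] at h)) hdiffcontra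
  · -- even pair, D3
    exfalso
    rcases h1 with h | h
    · rw [show b*(2:ℤ) = 2*b from by ring] at h
      obtain ⟨t, ht⟩ := h
      have hdvd2b : (2^L:ℤ) ∣ 2*b := ⟨2*t - 1, by linear_combination ht⟩
      exact dvd_two_a_contra L hL b hb hdvd2b
    · rw [show a*(0:ℤ) + 2^L = 2^L from by ring] at h
      exact dvd_size_contra h (by omega) (by rw [abs_of_pos hn0]; omega)
  · -- odd pair, D1
    rcases h1 with h | h
    · exact hsumdone (htwo _ (by rwa [show ((1:ℤ)-3) = -2 from by norm_num] at h))
    · exfalso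
      rw [show ((1:ℤ)+3) = 4 from by norm_num] at h
      have hdAB : (2^L:ℤ) ∣ a - b := quarter_dvd (by
        rwa [show (a-b)*4 = 4*(a-b) from by ring] at h)
      rcases h2 with h' | h'
      · exact hdiffcontra (htwo _ (by rwa [show ((1:ℤ)-3) = -2 from by norm_num] at h'))
      · rw [show ((1:ℤ)+3) = 4 from by norm_num] at h'
        have hdSB : (2^L:ℤ) ∣ a + b := quarter_dvd (by
          rwa [show (a+b)*4 = 4*(a+b) from by ring] at h')
        have : (2^L:ℤ) ∣ 2*a := by
          have := dvd_add hdAB hdSB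
          rwa [show a - b + (a+b) = 2*a from by ring] at this
        exact dvd_two_a_contra L hL a ha this
  · -- odd pair, D2
    exfalso
    have heven2 : ∀ x : ℤ, (2*2^L:ℤ) ∣ x → (2:ℤ) ∣ x := by
      intro x hx
      exact dvd_trans ⟨2^L, by ring⟩ hx
    rcases h1 with h | h
    · rw [show a*((1:ℤ)-3) - b*((1:ℤ)+3) = (a+2*b)*(-2) from by ring] at h
      have := heven2 _ (htwo _ h)
      omega
    · rw [show a*((1:ℤ)+3) + b*((1:ℤ)-3) = (2*a-b)*2 from by ring] at h
      have := heven2 _ (htwo' _ h)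
      omega
  · -- odd pair, D3
    exfalso
    rcases h1 with h | h
    · exact noD3 (m := b) (x := 3) hb (by norm_num) (by omega) h
    · exact noD3 (m := a) (x := 1) ha (by norm_num) (by omega) h


lemma range_filter_mod2 (N : ℕ) :
    (((Finset.range N).filter (fun k => k % 2 = 0)).card = (N+1)/2) ∧
    (((Finset.range N).filter (fun k => k % 2 = 1)).card = N/2) := by
  induction N with
  | zero => simp
  | succ n ih =>
    obtain ⟨ih0, ih1⟩ := ih
    have hnot : n ∉ Finset.range n := by simp
    by_cases h : n % 2 = 0
    · rw [Finset.range_add_one, Finset.filter_insert, Finset.filter_insert]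
      rw [if_pos h, if_neg (by omega)]
      rw [Finset.card_insert_of_notMem (fun hc => hnot (Finset.mem_of_mem_filter _ hc))]
      omega
    · rw [Finset.range_add_one, Finset.filter_insert, Finset.filter_insert]
      rw [if_neg h, if_pos (by omega)]
      rw [Finset.card_insert_of_notMem (fun hc => hnot (Finset.mem_of_mem_filter _ hc))]
      omega

lemma fin_filter_card (N : ℕ) (p : ℕ → Prop) [DecidablePred p] :
    ((Finset.univ : Finset (Fin N)).filter (fun k => p k.val)).card
      = ((Finset.range N).filter p).card := by
  rw [← Finset.card_image_of_injective ((Finset.univ : Finset (Fin N)).filter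
      (fun k => p k.val)) Fin.val_injective]
  congr 1
  ext x
  simp only [Finset.mem_image, Finset.mem_filter, Finset.mem_univ, true_and, Finset.mem_range]
  constructor
  · rintro ⟨k, hk, rfl⟩
    exact ⟨k.isLt, hk⟩
  · rintro ⟨h1, h2⟩
    exact ⟨⟨x, h1⟩, h2, rfl⟩

lemma card_evens (N : ℕ) (hN : N % 2 = 0) :
    ((Finset.univ : Finset (Fin N)).filter (fun k : Fin N => (k:ℕ) % 2 = 0)).card = N/2 ∧
    ((Finset.univ : Finset (Fin N)).filter (fun k : Fin N => (k:ℕ) % 2 = 1)).card = N/2 := by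
  obtain ⟨h0, h1⟩ := range_filter_mod2 N
  rw [fin_filter_card N (fun k => k % 2 = 0), fin_filter_card N (fun k => k % 2 = 1)]
  omega

lemma card_lt_half (N : ℕ) :
    ((Finset.univ : Finset (Fin N)).filter (fun l : Fin N => (l:ℕ) < N/2)).card = N/2 := by
  rw [fin_filter_card N (fun k => k < N/2)]
  have : (Finset.range N).filter (fun k => k < N/2) = Finset.range (N/2) := by
    ext x
    simp only [Finset.mem_filter, Finset.mem_range]
    omega
  rw [this, Finset.card_range]



lemma det_zero_of_rank_le_one {m n : Type*} [Fintype m] [Fintype n] [DecidableEq n]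
    (M : Matrix m n ℝ) (h : M.rank ≤ 1) (r1 r2 : m) (c1 c2 : n) :
    M r1 c1 * M r2 c2 - M r1 c2 * M r2 c1 = 0 := by
  set v : m → ℝ := fun i => M i c1 with hv
  set w : m → ℝ := fun i => M i c2 with hw
  have hvmem : v ∈ LinearMap.range M.mulVecLin := by
    refine ⟨Pi.single c1 1, ?_⟩
    rw [Matrix.mulVecLin_apply, Matrix.mulVec_single]
    ext i; simp [hv]
  have hwmem : w ∈ LinearMap.range M.mulVecLin := by
    refine ⟨Pi.single c2 1, ?_⟩
    rw [Matrix.mulVecLin_apply, Matrix.mulVec_single]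
    ext i; simp [hw]
  have hnli : ¬ LinearIndependent ℝ ![v, w] := by
    intro hli
    have hsp : Submodule.span ℝ (Set.range ![v, w]) ≤ LinearMap.range M.mulVecLin := by
      rw [Submodule.span_le]
      rintro x ⟨j, rfl⟩
      fin_cases j
      · exact hvmem
      · exact hwmem
    have h2 : finrank ℝ (Submodule.span ℝ (Set.range ![v, w])) = 2 := by
      rw [finrank_span_eq_card hli]
      simp
    have h3 := Submodule.finrank_mono hsp
    rw [h2] at h3
    have h4 : LinearMap.range M.mulVecLin ≤ ⊤ := le_top
    unfold Matrix.rank at h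
    omega
  rw [LinearIndependent.pair_iff] at hnli
  push_neg at hnli
  obtain ⟨s, t, hst, hne⟩ := hnli
  have e1 : s * v r1 + t * w r1 = 0 := by
    have := congrFun hst r1
    simpa using this
  have e2 : s * v r2 + t * w r2 = 0 := by
    have := congrFun hst r2
    simpa using this
  rcases eq_or_ne s 0 with hs | hs
  · have ht : t ≠ 0 := by tauto
    rw [hs] at e1 e2
    have hw1 : w r1 = 0 := by
      have : t * w r1 = 0 := by linarith
      rcases mul_eq_zero.mp this with h' | h'
      · exact absurd h' ht
      · exact h'
    have hw2 : w r2 = 0 := by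
      have : t * w r2 = 0 := by linarith
      rcases mul_eq_zero.mp this with h' | h'
      · exact absurd h' ht
      · exact h'
    show v r1 * w r2 - w r1 * v r2 = 0
    rw [hw1, hw2]; ring
  · have key : s * (v r1 * w r2 - w r1 * v r2) = 0 := by
      linear_combination (w r2) * e1 - (w r1) * e2
    rcases mul_eq_zero.mp key with h' | h'
    · exact absurd h' hs
    · exact h'

lemma dct_cc (N : ℕ) (hN0 : 0 < N) (k l : Fin N) :
    dct N k l = cc N ((2*((l:ℕ):ℤ)+1) * ((k:ℕ):ℤ)) := by
  unfold dct cc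
  rw [Matrix.of_apply]
  congr 1
  have hNR : ((N:ℝ)) ≠ 0 := by positivity
  push_cast
  field_simp

/-- Let `L ≥ 2`, `N = 2^L`.  If `(S₁, …, S_N)`, `Sᵢ = Rᵢ × Kᵢ`, are
rank-one supports with `|Rᵢ| ≤ N/2` and `|Kᵢ| ≤ 2`, forming a partition of
`⟦N⟧ × ⟦N⟧`, and for each `i` the submatrix of the DCT-II matrix indexed by
`Rᵢ × Kᵢ` has rank at most one, then `{S₁, …, S_N}` is exactly the family
`{O × {l, N+1−l}} ∪ {E × {l, N+1−l}}` for `1 ≤ l ≤ N/2`, where `O` (resp. `E`) is the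
set of odd (resp. even) 1-based indices, i.e. the 0-based indices `k` with `k % 2 = 0`
(resp. `k % 2 = 1`), and the 1-based column pair `{l, N+1−l}` corresponds to the 0-based
pair `{l, l.rev}` with `(l : ℕ) < N/2`. -/
theorem dct_rank_one_supports_determined (L : ℕ) (hL : 2 ≤ L) (N : ℕ) (hN : N = 2 ^ L)
    (R K : Fin N → Finset (Fin N))
    (hR : ∀ i, (R i).card ≤ N / 2) (hK : ∀ i, (K i).card ≤ 2)
    (hdisj : ∀ i j, i ≠ j → Disjoint (R i ×ˢ K i) (R j ×ˢ K j))
    (hcover : Finset.univ.biUnion (fun i => R i ×ˢ K i) = Finset.univ)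
    (hrank : ∀ i, ((dct N).submatrix
        (fun k : {x // x ∈ R i} => (k : Fin N))
        (fun l : {x // x ∈ K i} => (l : Fin N))).rank ≤ 1) :
    (Set.range fun i => R i ×ˢ K i) =
      {T : Finset (Fin N × Fin N) | ∃ l : Fin N, (l : ℕ) < N / 2 ∧
        (T = (Finset.univ.filter fun k : Fin N => (k : ℕ) % 2 = 0) ×ˢ
              ({l, l.rev} : Finset (Fin N)) ∨
         T = (Finset.univ.filter fun k : Fin N => (k : ℕ) % 2 = 1) ×ˢ
              ({l, l.rev} : Finset (Fin N)))} := by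
  have hN0 : 0 < N := by rw [hN]; positivity
  have hN4 : 4 ≤ N := by
    rw [hN]
    calc (4:ℕ) = 2^2 := by norm_num
    _ ≤ 2^L := Nat.pow_le_pow_right (by norm_num) hL
  have hNeven : N % 2 = 0 := by
    have : N = 2 * 2^(L-1) := by
      rw [hN, ← pow_succ']
      congr 1
      omega
    omega
  have hNZ : ((N:ℤ)) = 2^L := by rw [hN]; push_cast; ring
  -- counting
  have hsum : ∑ i : Fin N, (R i ×ˢ K i).card = N * N := by
    have h1 := congrArg Finset.card hcover
    rw [Finset.card_biUnion (fun x _ y _ hxy => hdisj x y hxy)] at h1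
    rw [h1, Finset.card_univ]
    simp [Fintype.card_prod]
  have hle : ∀ i, (R i ×ˢ K i).card ≤ N := by
    intro i
    rw [Finset.card_product]
    calc (R i).card * (K i).card ≤ (N/2) * 2 := Nat.mul_le_mul (hR i) (hK i)
    _ ≤ N := by omega
  have hEq : ∀ i, (R i ×ˢ K i).card = N := by
    intro i
    by_contra hne
    have hlt : (R i ×ˢ K i).card < N := lt_of_le_of_ne (hle i) hne
    have h2 : ∑ j : Fin N, (R j ×ˢ K j).card < ∑ _j : Fin N, N :=
      Finset.sum_lt_sum (fun j _ => hle j) ⟨i, Finset.mem_univ i, hlt⟩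
    rw [hsum, Finset.sum_const, Finset.card_univ, Fintype.card_fin, smul_eq_mul] at h2
    omega
  have hcards : ∀ i, (K i).card = 2 ∧ (R i).card = N/2 := by
    intro i
    have h1 := hEq i
    rw [Finset.card_product] at h1
    have h2 := hR i
    have hK2 : (K i).card = 2 := by
      by_contra h
      have h3 : (K i).card ≤ 1 := by have := hK i; omega
      have h4 : (R i).card * (K i).card ≤ (N/2) * 1 := Nat.mul_le_mul h2 h3
      omega
    refine ⟨hK2, ?_⟩
    rw [hK2] at h1
    omega
  -- per-support structure
  have hstruct : ∀ i, ∃ lm : Fin N, (lm : ℕ) < N / 2 ∧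
      (R i ×ˢ K i = (Finset.univ.filter fun k : Fin N => (k : ℕ) % 2 = 0) ×ˢ
          ({lm, lm.rev} : Finset (Fin N)) ∨
       R i ×ˢ K i = (Finset.univ.filter fun k : Fin N => (k : ℕ) % 2 = 1) ×ˢ
          ({lm, lm.rev} : Finset (Fin N))) := by
    intro i
    obtain ⟨hK2, hR2⟩ := hcards i
    obtain ⟨l, l', hll', hKeq⟩ := Finset.card_eq_two.mp hK2
    set a : ℤ := 2*((l:ℕ):ℤ)+1 with ha
    set b : ℤ := 2*((l':ℕ):ℤ)+1 with hb
    have hmeml : l ∈ K i := by rw [hKeq]; simp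
    have hmeml' : l' ∈ K i := by rw [hKeq]; simp
    have hdetcc : ∀ k k' : Fin N, k ∈ R i → k' ∈ R i →
        cc N (a*((k:ℕ):ℤ)) * cc N (b*((k':ℕ):ℤ))
          = cc N (a*((k':ℕ):ℤ)) * cc N (b*((k:ℕ):ℤ)) := by
      intro k k' hk hk'
      have h2 := det_zero_of_rank_le_one _ (hrank i) ⟨k, hk⟩ ⟨k', hk'⟩ ⟨l, hmeml⟩ ⟨l', hmeml'⟩
      simp only [Matrix.submatrix_apply] at h2
      rw [dct_cc N hN0, dct_cc N hN0, dct_cc N hN0, dct_cc N hN0] at h2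
      rw [ha, hb]
      linarith
    have hlval : ((l:ℕ):ℤ) < (N:ℤ) := by exact_mod_cast l.isLt
    have hl'val : ((l':ℕ):ℤ) < (N:ℤ) := by exact_mod_cast l'.isLt
    have hlvne : (l:ℕ) ≠ (l':ℕ) := fun h => hll' (Fin.val_injective h)
    have hamod : a % 2 = 1 := by omega
    have hbmod : b % 2 = 1 := by omega
    have ha0 : 0 < a := by positivity
    have hb0 : 0 < b := by positivity
    have ha2 : a < 2*2^L := by omega
    have hb2 : b < 2*2^L := by omega
    have habne : a ≠ b := by
      intro h
      apply hlvne
      have : ((l:ℕ):ℤ) = ((l':ℕ):ℤ) := by omega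
      exact_mod_cast this
    have hcond : ∀ k k' : Fin N, k ∈ R i → k' ∈ R i →
        Cond (2^L) a b ((k:ℕ):ℤ) ((k':ℕ):ℤ) := by
      intro k k' hk hk'
      have h1 := detCases L N hN a b ((k:ℕ):ℤ) ((k':ℕ):ℤ) (hdetcc k k' hk hk')
      rw [hNZ] at h1
      unfold Cond
      exact h1
    have hpar : ∀ k k' : Fin N, k ∈ R i → k' ∈ R i → (k:ℕ) % 2 = (k':ℕ) % 2 := by
      intro k k' hk hk'
      by_contra hne
      refine no_mixed L (by omega) a b ((k:ℕ):ℤ) ((k':ℕ):ℤ) hamod hbmod ha0 ha2 hb0 hb2 habne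
        (by positivity) (by positivity) ?_ ?_ (by omega) (hcond k k' hk hk')
      · have : ((k:ℕ):ℤ) < (N:ℤ) := by exact_mod_cast k.isLt
        omega
      · have : ((k':ℕ):ℤ) < (N:ℤ) := by exact_mod_cast k'.isLt
        omega
    obtain ⟨k0, hk0⟩ : (R i).Nonempty := Finset.card_pos.mp (by omega)
    -- the column relation, given two explicit rows
    have hcols : ∀ k1 k2 : Fin N, k1 ∈ R i → k2 ∈ R i →
        ((k1:ℕ):ℤ) = 0 ∧ ((k2:ℕ):ℤ) = 2 ∨ ((k1:ℕ):ℤ) = 1 ∧ ((k2:ℕ):ℤ) = 3 →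
        (l:ℕ) + (l':ℕ) = N - 1 := by
      intro k1 k2 hk1 hk2 hvals
      have h1 := hcond k1 k2 hk1 hk2
      have h2 : a + b = 2*2^L := by
        rcases hvals with ⟨hv1, hv2⟩ | ⟨hv1, hv2⟩
        · exact colsum L hL a b hamod hbmod ha0 ha2 hb0 hb2 habne 0 2
            (Or.inl ⟨rfl, rfl⟩) (by rw [hv1, hv2] at h1; exact h1)
        · exact colsum L hL a b hamod hbmod ha0 ha2 hb0 hb2 habne 1 3
            (Or.inr ⟨rfl, rfl⟩) (by rw [hv1, hv2] at h1; exact h1)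
      have hNsum : ((l:ℕ):ℤ) + ((l':ℕ):ℤ) = (N:ℤ) - 1 := by omega
      omega
    have hout : ∀ (S : Finset (Fin N)), R i = S → (l:ℕ) + (l':ℕ) = N - 1 →
        ∃ lm : Fin N, (lm : ℕ) < N / 2 ∧ R i ×ˢ K i = S ×ˢ ({lm, lm.rev} : Finset (Fin N)) := by
      intro S hS hlsum
      rcases lt_or_ge (l:ℕ) (N/2) with hlm | hlm
      · refine ⟨l, hlm, ?_⟩
        rw [hS, hKeq]
        have hrev : l' = l.rev := Fin.ext (by rw [Fin.val_rev]; omega)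
        rw [hrev]
      · have hl'lt : (l':ℕ) < N/2 := by omega
        refine ⟨l', hl'lt, ?_⟩
        rw [hS, hKeq]
        have hrev : l = l'.rev := Fin.ext (by rw [Fin.val_rev]; omega)
        rw [Finset.pair_comm l l', hrev]
    by_cases hpar0 : (k0:ℕ) % 2 = 0
    · have hsub : R i ⊆ Finset.univ.filter (fun k : Fin N => (k:ℕ) % 2 = 0) := by
        intro k hk
        simp only [Finset.mem_filter, Finset.mem_univ, true_and]
        rw [hpar k k0 hk hk0]
        exact hpar0
      have hReq : R i = Finset.univ.filter (fun k : Fin N => (k:ℕ) % 2 = 0) :=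
        Finset.eq_of_subset_of_card_le hsub (by rw [(card_evens N hNeven).1, hR2])
      have h0mem : (⟨0, by omega⟩ : Fin N) ∈ R i := by simp [hReq]
      have h2mem : (⟨2, by omega⟩ : Fin N) ∈ R i := by simp [hReq]
      have hlsum : (l:ℕ) + (l':ℕ) = N - 1 :=
        hcols _ _ h0mem h2mem (Or.inl ⟨by norm_num, by norm_num⟩)
      obtain ⟨lm, h1, h2⟩ := hout _ hReq hlsum
      exact ⟨lm, h1, Or.inl h2⟩
    · have hpar1 : (k0:ℕ) % 2 = 1 := by omega
      have hsub : R i ⊆ Finset.univ.filter (fun k : Fin N => (k:ℕ) % 2 = 1) := by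
        intro k hk
        simp only [Finset.mem_filter, Finset.mem_univ, true_and]
        rw [hpar k k0 hk hk0]
        exact hpar1
      have hReq : R i = Finset.univ.filter (fun k : Fin N => (k:ℕ) % 2 = 1) :=
        Finset.eq_of_subset_of_card_le hsub (by rw [(card_evens N hNeven).2, hR2])
      have h1mem : (⟨1, by omega⟩ : Fin N) ∈ R i := by simp [hReq]
      have h3mem : (⟨3, by omega⟩ : Fin N) ∈ R i := by simp [hReq]
      have hlsum : (l:ℕ) + (l':ℕ) = N - 1 :=
        hcols _ _ h1mem h3mem (Or.inr ⟨by norm_num, by norm_num⟩)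
      obtain ⟨lm, h1, h2⟩ := hout _ hReq hlsum
      exact ⟨lm, h1, Or.inr h2⟩
  -- final assembly
  have hinj : Function.Injective (fun i => R i ×ˢ K i) := by
    intro i j hij
    by_contra hne
    have hd := hdisj i j hne
    simp only at hij
    rw [hij] at hd
    rw [disjoint_self] at hd
    have := hEq j
    rw [hd] at this
    simp at this
    omega
  apply Set.eq_of_subset_of_ncard_le
  · rintro T ⟨i, rfl⟩
    exact hstruct i
  · -- card of the family ≤ card of range
    have hrange : (Set.range fun i => R i ×ˢ K i).ncard = N := by
      have h1 : (Set.range fun i => R i ×ˢ K i)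
          = ↑(Finset.univ.image (fun i => R i ×ˢ K i)) := by
        rw [Finset.coe_image, Finset.coe_univ, Set.image_univ]
      rw [h1, Set.ncard_coe_finset, Finset.card_image_of_injective _ hinj,
        Finset.card_univ, Fintype.card_fin]
    rw [hrange]
    set G : Finset (Finset (Fin N × Fin N)) :=
      ((Finset.univ.filter (fun l : Fin N => (l:ℕ) < N/2)).image
        (fun l => (Finset.univ.filter fun k : Fin N => (k : ℕ) % 2 = 0) ×ˢ
          ({l, l.rev} : Finset (Fin N)))) ∪
      ((Finset.univ.filter (fun l : Fin N => (l:ℕ) < N/2)).image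
        (fun l => (Finset.univ.filter fun k : Fin N => (k : ℕ) % 2 = 1) ×ˢ
          ({l, l.rev} : Finset (Fin N)))) with hG
    have hsubG : {T : Finset (Fin N × Fin N) | ∃ l : Fin N, (l : ℕ) < N / 2 ∧
        (T = (Finset.univ.filter fun k : Fin N => (k : ℕ) % 2 = 0) ×ˢ
              ({l, l.rev} : Finset (Fin N)) ∨
         T = (Finset.univ.filter fun k : Fin N => (k : ℕ) % 2 = 1) ×ˢ
              ({l, l.rev} : Finset (Fin N)))} ⊆ ↑G := by
      rintro T ⟨lq, hlq, hT | hT⟩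
      · rw [hG]
        simp only [Finset.coe_union, Set.mem_union, Finset.coe_image, Set.mem_image]
        left
        exact ⟨lq, by simp [hlq], hT.symm⟩
      · rw [hG]
        simp only [Finset.coe_union, Set.mem_union, Finset.coe_image, Set.mem_image]
        right
        exact ⟨lq, by simp [hlq], hT.symm⟩
    have hGcard : G.card ≤ N := by
      rw [hG]
      refine le_trans (Finset.card_union_le _ _) ?_
      have h1 := Finset.card_image_le (s := Finset.univ.filter (fun l : Fin N => (l:ℕ) < N/2))
        (f := fun l => (Finset.univ.filter fun k : Fin N => (k : ℕ) % 2 = 0) ×ˢ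
          ({l, l.rev} : Finset (Fin N)))
      have h2 := Finset.card_image_le (s := Finset.univ.filter (fun l : Fin N => (l:ℕ) < N/2))
        (f := fun l => (Finset.univ.filter fun k : Fin N => (k : ℕ) % 2 = 1) ×ˢ
          ({l, l.rev} : Finset (Fin N)))
      rw [card_lt_half N] at h1 h2
      omega
    calc ({T : Finset (Fin N × Fin N) | ∃ l : Fin N, (l : ℕ) < N / 2 ∧
        (T = (Finset.univ.filter fun k : Fin N => (k : ℕ) % 2 = 0) ×ˢ
              ({l, l.rev} : Finset (Fin N)) ∨
         T = (Finset.univ.filter fun k : Fin N => (k : ℕ) % 2 = 1) ×ˢ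
              ({l, l.rev} : Finset (Fin N)))}).ncard
        ≤ (↑G : Set (Finset (Fin N × Fin N))).ncard :=
          Set.ncard_le_ncard hsubG (G.finite_toSet)
      _ = G.card := Set.ncard_coe_finset G
      _ ≤ N := hGcard
  · exact Set.toFinite _
end

section
/- Let L ≥ 2 and N = 2^L. Then the Hadamard matrix H_N does not admit a PS-unique sparse factorization when the left factor is constrained to have at most N/2 nonzero entries per column and the right factor at most 2 nonzero entries per column: there exist pairs (X, Y) and (X', Y') of complex N×N matrices, each X, X' with at most N/2 nonzero entries per column and each Y, Y' with at most 2 nonzero entries per column, such that XYᵀ = X'Y'ᵀ = H_N but (X, Y) and (X', Y') are not PS-equivalent. -/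
open scoped Classical
open Matrix

/-- Reindexing equivalence `Fin (2^L) ⊕ Fin (2^L) ≃ Fin (2^(L+1))`. -/
def sumEquiv (L : ℕ) : Fin (2 ^ L) ⊕ Fin (2 ^ L) ≃ Fin (2 ^ (L + 1)) :=
  finSumFinEquiv.trans (finCongr (by rw [pow_succ, mul_two]))

/-- The Hadamard matrix, defined recursively by `H₁ := (1)` and
`H_{2n} := [[Hₙ, Hₙ], [Hₙ, −Hₙ]]` (2×2 block matrix), so `Had L` has size `2^L × 2^L`. -/
def Had : (L : ℕ) → Matrix (Fin (2 ^ L)) (Fin (2 ^ L)) ℂ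
  | 0 => Matrix.of fun _ _ => 1
  | L + 1 =>
      Matrix.reindex (sumEquiv L) (sumEquiv L)
        (Matrix.fromBlocks (Had L) (Had L) (Had L) (-Had L))

/-- `X` has at most `s` nonzero entries in each column. -/
noncomputable def colSparse {N : ℕ} (s : ℕ) (X : Matrix (Fin N) (Fin N) ℂ) : Prop :=
  ∀ j, (Finset.univ.filter fun k => X k j ≠ 0).card ≤ s

/-- The permutation matrix of the permutation `σ`. -/
def permMat {N : ℕ} (σ : Equiv.Perm (Fin N)) : Matrix (Fin N) (Fin N) ℂ :=
  Matrix.of fun i j => if i = σ j then 1 else 0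

/-- PS-equivalence of two pairs of `N × N` matrices: there exist a permutation matrix `P`
and an invertible diagonal matrix `D` with `X' = X D P` and `Y' = Y D⁻¹ P`. -/
noncomputable def PSEquiv {N : ℕ} (X Y X' Y' : Matrix (Fin N) (Fin N) ℂ) : Prop :=
  ∃ (σ : Equiv.Perm (Fin N)) (d : Fin N → ℂ), (∀ i, d i ≠ 0) ∧
    X' = X * Matrix.diagonal d * permMat σ ∧
    Y' = Y * Matrix.diagonal (fun i => (d i)⁻¹) * permMat σ

/-- Sign function: `(-1)^(popcount (i AND j))`. -/
def sgn : ℕ → ℕ → ℂ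
  | 0, _ => 1
  | (i+1), j =>
      (if (i+1) % 2 = 1 ∧ j % 2 = 1 then (-1 : ℂ) else 1) * sgn ((i+1)/2) (j/2)
decreasing_by exact Nat.div_lt_self (Nat.succ_pos i) one_lt_two

@[simp] lemma sgn_zero_left (j : ℕ) : sgn 0 j = 1 := by simp [sgn]

lemma sgn_rec (i j : ℕ) :
    sgn i j = (if i % 2 = 1 ∧ j % 2 = 1 then (-1 : ℂ) else 1) * sgn (i/2) (j/2) := by
  cases i with
  | zero => simp
  | succ i => rw [sgn]

@[simp] lemma sgn_zero_right (i : ℕ) : sgn i 0 = 1 := by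
  induction i using Nat.strong_induction_on with
  | _ i ih =>
    rcases Nat.eq_zero_or_pos i with h | h
    · subst h; simp
    · rw [sgn_rec, ih (i/2) (Nat.div_lt_self h one_lt_two)]
      simp

lemma sgn_comm (i j : ℕ) : sgn i j = sgn j i := by
  induction i using Nat.strong_induction_on generalizing j with
  | _ i ih =>
    rcases Nat.eq_zero_or_pos i with h | h
    · subst h; simp
    · rw [sgn_rec i j, sgn_rec j i, ih (i/2) (Nat.div_lt_self h one_lt_two) (j/2)]
      by_cases h1 : i % 2 = 1 <;> by_cases h2 : j % 2 = 1 <;> simp [h1, h2]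

lemma sgn_ne_zero (i j : ℕ) : sgn i j ≠ 0 := by
  induction i using Nat.strong_induction_on generalizing j with
  | _ i ih =>
    rcases Nat.eq_zero_or_pos i with h | h
    · subst h; simp
    · rw [sgn_rec]
      exact mul_ne_zero (by split <;> norm_num) (ih (i/2) (Nat.div_lt_self h one_lt_two) _)

lemma sgn_add_mul (t : ℕ) : ∀ i1 j1 i2 j2 : ℕ, i1 < 2^t → j1 < 2^t →
    sgn (i1 + 2^t * i2) (j1 + 2^t * j2) = sgn i1 j1 * sgn i2 j2 := by
  induction t with
  | zero =>
    intro i1 j1 i2 j2 hi hj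
    have h1 : i1 = 0 := by omega
    have h2 : j1 = 0 := by omega
    subst h1; subst h2; simp
  | succ t ih =>
    intro i1 j1 i2 j2 hi hj
    have h2 : (2:ℕ)^(t+1) = 2 * 2^t := by ring
    rw [sgn_rec (i1 + 2^(t+1) * i2)]
    have e1 : (i1 + 2^(t+1) * i2) % 2 = i1 % 2 := by
      rw [h2, mul_assoc, Nat.add_mul_mod_self_left]
    have e2 : (j1 + 2^(t+1) * j2) % 2 = j1 % 2 := by
      rw [h2, mul_assoc, Nat.add_mul_mod_self_left]
    have e3 : (i1 + 2^(t+1) * i2) / 2 = i1/2 + 2^t * i2 := by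
      rw [h2, mul_assoc, Nat.add_mul_div_left _ _ two_pos]
    have e4 : (j1 + 2^(t+1) * j2) / 2 = j1/2 + 2^t * j2 := by
      rw [h2, mul_assoc, Nat.add_mul_div_left _ _ two_pos]
    rw [e1, e2, e3, e4, ih (i1/2) (j1/2) i2 j2 (by omega) (by omega),
      ← mul_assoc, ← sgn_rec]

lemma sumEquiv_inl (L : ℕ) (a : Fin (2^L)) : ((sumEquiv L) (Sum.inl a) : ℕ) = a.val := by
  simp [sumEquiv]

lemma sumEquiv_inr (L : ℕ) (a : Fin (2^L)) : ((sumEquiv L) (Sum.inr a) : ℕ) = 2^L + a.val := by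
  simp [sumEquiv, Nat.add_comm]

@[simp] lemma sgn_one_one : sgn 1 1 = -1 := by rw [sgn_rec]; norm_num

lemma had_eq (L : ℕ) (i j : Fin (2^L)) : Had L i j = sgn i.val j.val := by
  induction L with
  | zero =>
    have hi : (i : ℕ) = 0 := by omega
    rw [hi]
    simp [Had]
  | succ L ih =>
    obtain ⟨x, rfl⟩ := (sumEquiv L).surjective i
    obtain ⟨y, rfl⟩ := (sumEquiv L).surjective j
    have key : ∀ a b : Fin (2^L), ∀ s t : ℕ,
        sgn (a.val + 2^L * s) (b.val + 2^L * t) = sgn a.val b.val * sgn s t :=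
      fun a b s t => sgn_add_mul L a.val b.val s t a.isLt b.isLt
    cases x with
    | inl a =>
      cases y with
      | inl b =>
        rw [sumEquiv_inl, sumEquiv_inl]
        simp [Had, ih]
      | inr b =>
        rw [sumEquiv_inl, sumEquiv_inr]
        have h : sgn (a:ℕ) (2^L + (b:ℕ)) = sgn (a:ℕ) (b:ℕ) := by
          have := key a b 0 1
          simpa [Nat.add_comm] using this
        rw [h]
        simp [Had, ih]
    | inr a =>
      cases y with
      | inl b =>
        rw [sumEquiv_inr, sumEquiv_inl]
        have h : sgn (2^L + (a:ℕ)) (b:ℕ) = sgn (a:ℕ) (b:ℕ) := by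
          have := key a b 1 0
          simpa [Nat.add_comm] using this
        rw [h]
        simp [Had, ih]
      | inr b =>
        rw [sumEquiv_inr, sumEquiv_inr]
        have h : sgn (2^L + (a:ℕ)) (2^L + (b:ℕ)) = -sgn (a:ℕ) (b:ℕ) := by
          have := key a b 1 1
          rw [sgn_one_one] at this
          simpa [Nat.add_comm] using this
        rw [h]
        simp [Had, ih]

/-- Block-diagonal factor: blocks of size `2^t` along the diagonal, entries from `sgn`. -/
def Xf (L t : ℕ) : Matrix (Fin (2^L)) (Fin (2^L)) ℂ :=
  Matrix.of fun i k => if (i:ℕ) / 2^t = (k:ℕ) / 2^t then sgn ((i:ℕ) % 2^t) ((k:ℕ) % 2^t) else 0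

/-- Complementary factor, matching residues mod `2^t`, entries from `sgn` on quotients. -/
def Yg (L t : ℕ) : Matrix (Fin (2^L)) (Fin (2^L)) ℂ :=
  Matrix.of fun i j => if (i:ℕ) % 2^t = (j:ℕ) % 2^t then sgn ((i:ℕ) / 2^t) ((j:ℕ) / 2^t) else 0

lemma Xf_symm (L t : ℕ) : (Xf L t)ᵀ = Xf L t := by
  ext i k
  show (if (k:ℕ)/2^t = (i:ℕ)/2^t then sgn ((k:ℕ) % 2^t) ((i:ℕ) % 2^t) else 0)
    = (if (i:ℕ)/2^t = (k:ℕ)/2^t then sgn ((i:ℕ) % 2^t) ((k:ℕ) % 2^t) else 0)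
  by_cases h : (i:ℕ)/2^t = (k:ℕ)/2^t
  · rw [if_pos h, if_pos h.symm, sgn_comm]
  · rw [if_neg h, if_neg fun hh => h hh.symm]

lemma Yg_symm (L t : ℕ) : (Yg L t)ᵀ = Yg L t := by
  ext i k
  show (if (k:ℕ) % 2^t = (i:ℕ) % 2^t then sgn ((k:ℕ)/2^t) ((i:ℕ)/2^t) else 0)
    = (if (i:ℕ) % 2^t = (k:ℕ) % 2^t then sgn ((i:ℕ)/2^t) ((k:ℕ)/2^t) else 0)
  by_cases h : (i:ℕ) % 2^t = (k:ℕ) % 2^t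
  · rw [if_pos h, if_pos h.symm, sgn_comm]
  · rw [if_neg h, if_neg fun hh => h hh.symm]

lemma had_symm (L : ℕ) : (Had L)ᵀ = Had L := by
  ext i j
  rw [Matrix.transpose_apply, had_eq, had_eq, sgn_comm]

lemma prod_XY (L t : ℕ) (ht : t ≤ L) : Xf L t * (Yg L t)ᵀ = Had L := by
  ext i j
  rw [Matrix.mul_apply]
  have ha0 : 0 < 2^t := Nat.pow_pos two_pos
  have hN : (2:ℕ)^L = 2^(L-t) * 2^t := by rw [← pow_add]; congr 1; omega
  have h1 : (i:ℕ) / 2^t < 2^(L-t) := by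
    rw [Nat.div_lt_iff_lt_mul ha0, ← hN]; exact i.isLt
  have hk0lt : ((i:ℕ) / 2^t) * 2^t + (j:ℕ) % 2^t < 2^L := by
    calc ((i:ℕ)/2^t) * 2^t + (j:ℕ) % 2^t < ((i:ℕ)/2^t) * 2^t + 2^t := by
          have := Nat.mod_lt (j:ℕ) ha0; omega
      _ = ((i:ℕ)/2^t + 1) * 2^t := by ring
      _ ≤ 2^(L-t) * 2^t := Nat.mul_le_mul_right _ h1
      _ = 2^L := hN.symm
  rw [Finset.sum_eq_single (⟨((i:ℕ)/2^t) * 2^t + (j:ℕ) % 2^t, hk0lt⟩ : Fin (2^L))]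
  · have hdiv : (((i:ℕ)/2^t) * 2^t + (j:ℕ) % 2^t) / 2^t = (i:ℕ)/2^t := by
      rw [add_comm, Nat.add_mul_div_right _ _ ha0, Nat.div_eq_of_lt (Nat.mod_lt _ ha0), zero_add]
    have hmod : (((i:ℕ)/2^t) * 2^t + (j:ℕ) % 2^t) % 2^t = (j:ℕ) % 2^t := by
      rw [add_comm, Nat.add_mul_mod_self_right, Nat.mod_mod_of_dvd _ (dvd_refl _)]
    rw [Matrix.transpose_apply]
    show (if (i:ℕ)/2^t = _ / 2^t then sgn ((i:ℕ) % 2^t) (_ % 2^t) else 0) *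
      (if (j:ℕ) % 2^t = _ % 2^t then sgn ((j:ℕ)/2^t) (_ / 2^t) else 0) = Had L i j
    rw [hdiv, hmod, if_pos rfl, if_pos rfl, sgn_comm ((j:ℕ)/2^t), had_eq]
    rw [← sgn_add_mul t ((i:ℕ) % 2^t) ((j:ℕ) % 2^t) ((i:ℕ)/2^t) ((j:ℕ)/2^t)
      (Nat.mod_lt _ ha0) (Nat.mod_lt _ ha0), Nat.mod_add_div, Nat.mod_add_div]
  · intro k _ hk
    rw [Matrix.transpose_apply]
    show (if (i:ℕ)/2^t = (k:ℕ)/2^t then _ else 0) *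
      (if (j:ℕ) % 2^t = (k:ℕ) % 2^t then _ else 0) = 0
    by_cases hd : (i:ℕ)/2^t = (k:ℕ)/2^t
    · by_cases hm : (j:ℕ) % 2^t = (k:ℕ) % 2^t
      · exfalso
        apply hk
        apply Fin.ext
        show (k:ℕ) = ((i:ℕ)/2^t) * 2^t + (j:ℕ) % 2^t
        rw [hd, hm, Nat.div_add_mod']
      · rw [if_neg hm, mul_zero]
    · rw [if_neg hd, zero_mul]
  · intro h
    exact absurd (Finset.mem_univ _) h

lemma prod_YX (L t : ℕ) (ht : t ≤ L) : Yg L t * (Xf L t)ᵀ = Had L := by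
  rw [Xf_symm]
  have : Yg L t * Xf L t = (Xf L t * Yg L t)ᵀ := by
    rw [Matrix.transpose_mul, Xf_symm, Yg_symm]
  rw [this, ← Yg_symm, prod_XY L t ht, had_symm]

lemma sparse_Xf (L t : ℕ) : colSparse (2^t) (Xf L t) := by
  intro j
  refine le_trans (Finset.card_le_card_of_injOn (t := Finset.range (2^t))
    (fun k : Fin (2^L) => (k:ℕ) % 2^t)
    (fun a _ => Finset.mem_range.mpr (Nat.mod_lt _ (Nat.pow_pos two_pos)))
    (fun k1 h1 k2 h2 h => by
      simp only [Finset.coe_filter, Set.mem_setOf_eq, Finset.mem_univ, true_and] at h1 h2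
      have d1 : (k1:ℕ)/2^t = (j:ℕ)/2^t := by
        by_contra hc
        exact h1 (if_neg hc)
      have d2 : (k2:ℕ)/2^t = (j:ℕ)/2^t := by
        by_contra hc
        exact h2 (if_neg hc)
      apply Fin.ext
      rw [← Nat.div_add_mod' (k1:ℕ) (2^t), ← Nat.div_add_mod' (k2:ℕ) (2^t), d1, d2, show (k1:ℕ) % 2^t = (k2:ℕ) % 2^t from h]))
    (le_of_eq (Finset.card_range _))

lemma sparse_Yg (L t : ℕ) (ht : t ≤ L) : colSparse (2^(L-t)) (Yg L t) := by
  intro j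
  have ha0 : 0 < 2^t := Nat.pow_pos two_pos
  have hN : (2:ℕ)^L = 2^(L-t) * 2^t := by rw [← pow_add]; congr 1; omega
  refine le_trans (Finset.card_le_card_of_injOn (t := Finset.range (2^(L-t)))
    (fun k : Fin (2^L) => (k:ℕ) / 2^t)
    (fun a _ => Finset.mem_range.mpr (by rw [Nat.div_lt_iff_lt_mul ha0, ← hN]; exact a.isLt))
    (fun k1 h1 k2 h2 h => by
      simp only [Finset.coe_filter, Set.mem_setOf_eq, Finset.mem_univ, true_and] at h1 h2
      have d1 : (k1:ℕ) % 2^t = (j:ℕ) % 2^t := by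
        by_contra hc
        exact h1 (if_neg hc)
      have d2 : (k2:ℕ) % 2^t = (j:ℕ) % 2^t := by
        by_contra hc
        exact h2 (if_neg hc)
      apply Fin.ext
      rw [← Nat.div_add_mod' (k1:ℕ) (2^t), ← Nat.div_add_mod' (k2:ℕ) (2^t), d1, d2, show (k1:ℕ) / 2^t = (k2:ℕ) / 2^t from h]))
    (le_of_eq (Finset.card_range _))

lemma mul_diag_perm {N : ℕ} (A : Matrix (Fin N) (Fin N) ℂ) (d : Fin N → ℂ)
    (σ : Equiv.Perm (Fin N)) (i j : Fin N) :
    (A * Matrix.diagonal d * permMat σ) i j = A i (σ j) * d (σ j) := by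
  rw [Matrix.mul_apply, Finset.sum_eq_single (σ j)]
  · rw [Matrix.mul_diagonal]
    show _ * (if σ j = σ j then (1:ℂ) else 0) = _
    rw [if_pos rfl, mul_one]
  · intro k _ hk
    show _ * (if k = σ j then (1:ℂ) else 0) = 0
    rw [if_neg hk, mul_zero]
  · intro h
    exact absurd (Finset.mem_univ _) h

/-- For `L ≥ 2`, `N = 2^L`, the Hadamard matrix `H_N` does not admit a
PS-unique sparse factorization with left factor at most `N/2`-sparse per column and right
factor at most `2`-sparse per column: there are two such factorizations of `H_N` that are
not PS-equivalent. -/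
theorem hadamard_not_PS_unique (L : ℕ) (hL : 2 ≤ L) :
    ∃ X Y X' Y' : Matrix (Fin (2 ^ L)) (Fin (2 ^ L)) ℂ,
      colSparse (2 ^ L / 2) X ∧ colSparse 2 Y ∧
      colSparse (2 ^ L / 2) X' ∧ colSparse 2 Y' ∧
      X * Yᵀ = Had L ∧ X' * Y'ᵀ = Had L ∧ ¬ PSEquiv X Y X' Y' := by
  obtain ⟨K, rfl⟩ : ∃ K, L = K + 2 := ⟨L - 2, by omega⟩
  have hhalf : 2 ^ (K+2) / 2 = 2 ^ (K+1) := by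
    rw [pow_succ]
    exact Nat.mul_div_cancel _ two_pos
  have h4 : (4:ℕ) ≤ 2 ^ (K+2) := by
    calc (4:ℕ) = 2^2 := rfl
      _ ≤ 2^(K+2) := Nat.pow_le_pow_right two_pos (by omega)
  have hn2 : (2:ℕ) ≤ 2 ^ (K+1) := by
    calc (2:ℕ) = 2^1 := rfl
      _ ≤ 2^(K+1) := Nat.pow_le_pow_right two_pos (by omega)
  refine ⟨Xf (K+2) (K+1), Yg (K+2) (K+1), Yg (K+2) 1, Xf (K+2) 1, ?_, ?_, ?_, ?_, ?_, ?_, ?_⟩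
  · rw [hhalf]; exact sparse_Xf (K+2) (K+1)
  · have h := sparse_Yg (K+2) (K+1) (by omega)
    rwa [show K+2-(K+1) = 1 from by omega, pow_one] at h
  · rw [hhalf]
    have h := sparse_Yg (K+2) 1 (by omega)
    rwa [show K+2-1 = K+1 from by omega] at h
  · have h := sparse_Xf (K+2) 1
    rwa [pow_one] at h
  · exact prod_XY (K+2) (K+1) (by omega)
  · exact prod_YX (K+2) 1 (by omega)
  · rintro ⟨σ, d, hd, hX, hY⟩
    set i0 : Fin (2^(K+2)) := ⟨0, by omega⟩ with hi0
    set i1 : Fin (2^(K+2)) := ⟨1, by omega⟩ with hi1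
    have e0 := congrFun (congrFun hY i0) i0
    have e1 := congrFun (congrFun hY i1) i0
    rw [mul_diag_perm] at e0 e1
    set m := σ i0 with hm
    have v00 : Xf (K+2) 1 i0 i0 = 1 := by
      show (if (0:ℕ) / 2^1 = (0:ℕ) / 2^1 then sgn ((0:ℕ) % 2^1) ((0:ℕ) % 2^1) else 0) = 1
      norm_num
    have v10 : Xf (K+2) 1 i1 i0 = 1 := by
      show (if (1:ℕ) / 2^1 = (0:ℕ) / 2^1 then sgn ((1:ℕ) % 2^1) ((0:ℕ) % 2^1) else 0) = 1
      norm_num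
    rw [v00] at e0
    rw [v10] at e1
    have hY0 : Yg (K+2) (K+1) i0 m ≠ 0 := left_ne_zero_of_mul_eq_one e0.symm
    have hY1 : Yg (K+2) (K+1) i1 m ≠ 0 := left_ne_zero_of_mul_eq_one e1.symm
    have c0 : (0:ℕ) % 2^(K+1) = (m:ℕ) % 2^(K+1) := by
      by_contra hc
      exact hY0 (if_neg hc)
    have c1 : (1:ℕ) % 2^(K+1) = (m:ℕ) % 2^(K+1) := by
      by_contra hc
      exact hY1 (if_neg hc)
    rw [Nat.zero_mod] at c0
    rw [Nat.mod_eq_of_lt (by omega)] at c1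
    omega
end

section
/- Let A be an m×n complex matrix of rank one with no zero entry, and let S ⊆ ⟦m⟧ × ⟦n⟧. Then A is the unique m×n complex matrix M of rank at most one satisfying M_{k,l} = A_{k,l} for all (k, l) ∈ S if and only if the bipartite graph with vertex parts ⟦m⟧ and ⟦n⟧ and edge set S is connected. -/
open Matrix

lemma factor_of_rank_le_one' {m n : ℕ} (M : Matrix (Fin m) (Fin n) ℂ) (h : M.rank ≤ 1) :
    ∃ (x : Fin m → ℂ) (y : Fin n → ℂ), ∀ k l, M k l = x k * y l := by
  have h' : (LinearMap.range M.mulVecLin).IsPrincipal :=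
    (Submodule.finrank_le_one_iff_isPrincipal _).mp h
  obtain ⟨x, hx⟩ := h'.principal
  have hcol : ∀ l : Fin n, ∃ c : ℂ, ∀ k, M k l = c * x k := by
    intro l
    have hmem : M.mulVec (Pi.single l 1) ∈ LinearMap.range M.mulVecLin := ⟨_, rfl⟩
    rw [hx, Submodule.mem_span_singleton] at hmem
    obtain ⟨c, hc⟩ := hmem
    exact ⟨c, fun k => by
      have := congrFun hc k
      simpa [Matrix.mulVec_single] using this.symm⟩
  choose y hy using hcol
  exact ⟨x, y, fun k l => by rw [hy l k, mul_comm]⟩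

lemma rank_prod_le_one' {m n : ℕ} (x : Fin m → ℂ) (y : Fin n → ℂ) :
    (Matrix.of fun k l => x k * y l).rank ≤ 1 := by
  have h1 : (Matrix.of fun k l => x k * y l) = vecMulVec x y := rfl
  rw [h1, vecMulVec_eq Unit]
  refine (Matrix.rank_mul_le_left _ _).trans ?_
  simpa using Matrix.rank_le_card_width (Matrix.replicateCol Unit x)



/-- The bipartite graph associated to a set `S ⊆ ⟦m⟧ × ⟦n⟧`: its vertex set is the
disjoint union of `⟦m⟧` (rows) and `⟦n⟧` (columns), with an edge between row `k` and
column `l` exactly when `(k, l) ∈ S`. -/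
def bipGraph (m n : ℕ) (S : Set (Fin m × Fin n)) : SimpleGraph (Fin m ⊕ Fin n) where
  Adj u v :=
    (∃ k l, u = Sum.inl k ∧ v = Sum.inr l ∧ (k, l) ∈ S) ∨
    (∃ k l, u = Sum.inr l ∧ v = Sum.inl k ∧ (k, l) ∈ S)
  symm := by
    constructor
    rintro u v (⟨k, l, rfl, rfl, h⟩ | ⟨k, l, rfl, rfl, h⟩)
    · exact Or.inr ⟨k, l, rfl, rfl, h⟩
    · exact Or.inl ⟨k, l, rfl, rfl, h⟩
  loopless := by
    constructor
    rintro u (⟨k, l, h1, h2, -⟩ | ⟨k, l, h1, h2, -⟩) <;> subst h1 <;> simp at h2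

/-- Let `A` be an `m × n` complex matrix of rank one with no zero
entry and `S ⊆ ⟦m⟧ × ⟦n⟧`.  Then `A` is the unique matrix of rank at most one agreeing
with `A` on `S` if and only if the bipartite graph associated to `S` is connected. -/
theorem rank_one_completion_unique_iff_connected {m n : ℕ}
    (A : Matrix (Fin m) (Fin n) ℂ) (hrank : A.rank = 1) (hA : ∀ k l, A k l ≠ 0)
    (S : Set (Fin m × Fin n)) :
    (∀ M : Matrix (Fin m) (Fin n) ℂ, M.rank ≤ 1 →
        (∀ p ∈ S, M p.1 p.2 = A p.1 p.2) → M = A) ↔ (bipGraph m n S).Connected := by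
  classical
  have hm : 0 < m := by
    have h1 := A.rank_le_card_height
    rw [hrank, Fintype.card_fin] at h1; omega
  have hn : 0 < n := by
    have h1 := A.rank_le_card_width
    rw [hrank, Fintype.card_fin] at h1; omega
  obtain ⟨a, b, hab⟩ := factor_of_rank_le_one' A hrank.le
  have ha : ∀ k, a k ≠ 0 := fun k h => by
    have := hA k ⟨0, hn⟩; rw [hab, h, zero_mul] at this; exact this rfl
  have hb : ∀ l, b l ≠ 0 := fun l h => by
    have := hA ⟨0, hm⟩ l; rw [hab, h, mul_zero] at this; exact this rfl
  constructor
  · intro h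
    by_contra hnc
    rw [SimpleGraph.connected_iff] at hnc
    push_neg at hnc
    have hpc : ¬ (bipGraph m n S).Preconnected := by
      intro hp; exact (hnc hp).false (Sum.inl ⟨0, hm⟩)
    rw [SimpleGraph.Preconnected] at hpc
    push_neg at hpc
    obtain ⟨u, v, huv⟩ := hpc
    set R : Fin m ⊕ Fin n → Prop := fun w => (bipGraph m n S).Reachable u w with hR
    set f : Fin m → ℂ := fun k => if R (Sum.inl k) then 1 else 2 with hf
    set g : Fin n → ℂ := fun l => if R (Sum.inr l) then 1 else 2⁻¹ with hg
    set M : Matrix (Fin m) (Fin n) ℂ :=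
      Matrix.of (fun k l => (f k * a k) * (g l * b l)) with hMdef
    have hMrank : M.rank ≤ 1 := rank_prod_le_one' _ _
    have hRiff : ∀ k l, (k, l) ∈ S → (R (Sum.inl k) ↔ R (Sum.inr l)) := by
      intro k l hS
      have hadj : (bipGraph m n S).Adj (Sum.inl k) (Sum.inr l) :=
        Or.inl ⟨k, l, rfl, rfl, hS⟩
      exact ⟨fun hr => hr.trans hadj.reachable, fun hr => hr.trans hadj.symm.reachable⟩
    have hMS : ∀ p ∈ S, M p.1 p.2 = A p.1 p.2 := by
      rintro ⟨k, l⟩ hS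
      have hiff := hRiff k l hS
      have hfg : f k * g l = 1 := by
        by_cases hk : R (Sum.inl k)
        · simp [hf, hg, hk, hiff.mp hk]
        · have hl : ¬ R (Sum.inr l) := fun hl => hk (hiff.mpr hl)
          simp [hf, hg, hk, hl]
      show (f k * a k) * (g l * b l) = A k l
      rw [hab]
      linear_combination (a k * b l) * hfg
    have hMA := h M hMrank hMS
    -- find an entry where the factor is not 1
    have hfactor : ∀ k l, f k * g l = 1 := by
      intro k l
      have := congrFun (congrFun hMA k) l
      have hAe : A k l = a k * b l := hab k l
      have : (f k * a k) * (g l * b l) = a k * b l := by rw [← hAe]; exact this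
      have hne : a k * b l ≠ 0 := mul_ne_zero (ha k) (hb l)
      field_simp at this
      have : (f k * g l) * (a k * b l) = 1 * (a k * b l) := by rw [one_mul]; linear_combination this
      exact mul_right_cancel₀ hne this
    have hRu : R u := SimpleGraph.Reachable.refl u
    have hRv : ¬ R v := huv
    have h2 : (2 : ℂ) ≠ 1 := by norm_num
    have h2' : (2 : ℂ)⁻¹ ≠ 1 := by norm_num
    cases u with
    | inl k0 =>
      cases v with
      | inl k1 =>
        have hfk0 : f k0 = 1 := by simp [hf, hRu]
        have hfk1 : f k1 = 2 := by simp [hf, hRv]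
        by_cases hl : R (Sum.inr ⟨0, hn⟩)
        · have hgl : g ⟨0, hn⟩ = 1 := by simp [hg, hl]
          exact h2 (by simpa [hfk1, hgl] using hfactor k1 ⟨0, hn⟩)
        · have hgl : g ⟨0, hn⟩ = 2⁻¹ := by simp [hg, hl]
          exact h2' (by simpa [hfk0, hgl] using hfactor k0 ⟨0, hn⟩)
      | inr l1 =>
        have hfk0 : f k0 = 1 := by simp [hf, hRu]
        have hgl : g l1 = 2⁻¹ := by simp [hg, hRv]
        exact h2' (by simpa [hfk0, hgl] using hfactor k0 l1)
    | inr l0 =>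
      cases v with
      | inl k1 =>
        have hgl : g l0 = 1 := by simp [hg, hRu]
        have hfk1 : f k1 = 2 := by simp [hf, hRv]
        exact h2 (by simpa [hfk1, hgl] using hfactor k1 l0)
      | inr l1 =>
        have hgl0 : g l0 = 1 := by simp [hg, hRu]
        have hgl1 : g l1 = 2⁻¹ := by simp [hg, hRv]
        by_cases hk : R (Sum.inl ⟨0, hm⟩)
        · have hfk : f ⟨0, hm⟩ = 1 := by simp [hf, hk]
          exact h2' (by simpa [hfk, hgl1] using hfactor ⟨0, hm⟩ l1)
        · have hfk : f ⟨0, hm⟩ = 2 := by simp [hf, hk]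
          exact h2 (by simpa [hfk, hgl0] using hfactor ⟨0, hm⟩ l0)
  · intro hconn M hM hMS
    obtain ⟨x, y, hxy⟩ := factor_of_rank_le_one' M hM
    -- every row has an edge
    have hrow : ∀ k : Fin m, ∃ l, (k, l) ∈ S := by
      intro k
      obtain ⟨w⟩ := hconn (Sum.inl k) (Sum.inr ⟨0, hn⟩)
      cases w with
      | cons hadj p =>
        rcases hadj with ⟨k', l', hk, hl, hS⟩ | ⟨k', l', hk, hl, hS⟩
        · obtain rfl : k' = k := by injection hk.symm
          exact ⟨l', hS⟩
        · simp at hk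
    have hcol : ∀ l : Fin n, ∃ k, (k, l) ∈ S := by
      intro l
      obtain ⟨w⟩ := hconn (Sum.inr l) (Sum.inl ⟨0, hm⟩)
      cases w with
      | cons hadj p =>
        rcases hadj with ⟨k', l', hk, hl, hS⟩ | ⟨k', l', hk, hl, hS⟩
        · simp at hk
        · obtain rfl : l' = l := by injection hk.symm
          exact ⟨k', hS⟩
    have hedge : ∀ k l, (k, l) ∈ S → x k * y l = a k * b l := by
      intro k l hS
      have := hMS (k, l) hS
      rw [hxy, hab] at this; exact this
    have hx : ∀ k, x k ≠ 0 := by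
      intro k hk
      obtain ⟨l, hS⟩ := hrow k
      have := hedge k l hS
      rw [hk, zero_mul] at this
      exact mul_ne_zero (ha k) (hb l) this.symm
    have hy : ∀ l, y l ≠ 0 := by
      intro l hl
      obtain ⟨k, hS⟩ := hcol l
      have := hedge k l hS
      rw [hl, mul_zero] at this
      exact mul_ne_zero (ha k) (hb l) this.symm
    set val : Fin m ⊕ Fin n → ℂ := Sum.elim (fun k => x k / a k) (fun l => b l / y l)
      with hval
    have hkey : ∀ u v, (bipGraph m n S).Adj u v → val u = val v := by
      have base : ∀ k l, (k, l) ∈ S → x k / a k = b l / y l := by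
        intro k l hS
        rw [div_eq_div_iff (ha k) (hy l)]
        linear_combination hedge k l hS
      rintro u v (⟨k, l, rfl, rfl, hS⟩ | ⟨k, l, rfl, rfl, hS⟩)
      · exact base k l hS
      · exact (base k l hS).symm
    have hconst : ∀ u v, val u = val v := by
      intro u v
      obtain ⟨w⟩ := hconn u v
      induction w with
      | nil => rfl
      | cons hadj p ih => exact (hkey _ _ hadj).trans ih
    ext k l
    have := hconst (Sum.inl k) (Sum.inr l)
    simp only [hval, Sum.elim_inl, Sum.elim_inr] at this
    rw [div_eq_div_iff (ha k) (hy l)] at this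
    rw [hxy, hab]
    linear_combination this
end
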